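/- arXiv:2411.18155 — 4 statements merged into one kernel-verified Lean document; each statement's English description precedes it below -/
import Mathlib

section
/- Let d ∈ ℕ, s, α, β, γ, θ ∈ ℝ, and p, q ∈ (0,∞]. Assume a = (a_{j,t,m})_{(j,t,m)∈J} follows a Besov sequence prior with parameters (α,β,γ,θ) and template random variable X satisfying P(X ≠ 0) > 0. If ‖a‖_{b^s_{p,q}} < ∞ almost surely, then Property A is satisfied. -/
open MeasureTheory ProbabilityTheory ENNReal

noncomputable section

/-- The sup-norm `‖m‖_∞` of a lattice point `m ∈ ℤ^d`, as a real number. -/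
def znorm {d : ℕ} (m : Fin d → ℤ) : ℝ :=
  ((Finset.univ.sup fun i => (m i).natAbs : ℕ) : ℝ)

/-- `M_j = (2^{j+1}+1)^d`. -/
def Mnum (d j : ℕ) : ℕ := (2 ^ (j + 1) + 1) ^ d

/-- `N_j = M_{j+1} - M_j`. -/
def Nnum (d j : ℕ) : ℕ := Mnum d (j + 1) - Mnum d j

/-- The `ℓ^p`-norm (with values in `[0,∞]`) of a family of values in `[0,∞]`,
for `p ∈ (0,∞]`. -/
def lpNorm (p : ℝ≥0∞) {ι : Type*} (x : ι → ℝ≥0∞) : ℝ≥0∞ :=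
  if p = ∞ then ⨆ i, x i else (∑' i, x i ^ p.toReal) ^ (1 / p.toReal)

/-- The index set `{(j,t) : j ∈ ℕ₀, t ∈ T_j}` where `T_0 = {F}^d` and
`T_j = {F,M}^d \ {F}^d` for `j ≥ 1`; here `F = false`, `M = true`. -/
def JIdx (d : ℕ) : Type :=
  {jt : ℕ × (Fin d → Bool) // (jt.2 = fun _ => false) ↔ jt.1 = 0}

/-- The Besov sequence (quasi-)norm `‖a‖_{b^s_{p,q}}`, with values in `[0,∞]`,
where `d/p` is read as `0` for `p = ∞`. -/
def besovNorm (d : ℕ) (s : ℝ) (p q : ℝ≥0∞)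
    (a : ℕ → (Fin d → Bool) → (Fin d → ℤ) → ℝ) : ℝ≥0∞ :=
  lpNorm q (fun jt : JIdx d =>
    ENNReal.ofReal ((2 : ℝ) ^ ((jt.1.1 : ℝ) * (s + d / 2 - d * (p⁻¹).toReal))) *
      lpNorm p fun m : Fin d → ℤ => ENNReal.ofReal |a jt.1.1 jt.1.2 m|)

/-- The deterministic coefficient `2^{jα} (j+1)^θ (1+‖m‖_∞/2^j)^{β+(γ-β)𝟙_{j=0}}`
of the Besov sequence prior. -/
def priorCoef (d : ℕ) (α β γ θ : ℝ) (j : ℕ) (m : Fin d → ℤ) : ℝ :=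
  (2 : ℝ) ^ ((j : ℝ) * α) * ((j : ℝ) + 1) ^ θ *
    (1 + znorm m / 2 ^ j) ^ (if j = 0 then γ else β)

/-- The deterministic coefficient `2^{jα} (1+‖m‖_∞/2^j)^{β+(γ-β)𝟙_{j=0}}`
of the Bernoulli–Besov sequence prior. -/
def priorCoefB (d : ℕ) (α β γ : ℝ) (j : ℕ) (m : Fin d → ℤ) : ℝ :=
  (2 : ℝ) ^ ((j : ℝ) * α) * (1 + znorm m / 2 ^ j) ^ (if j = 0 then γ else β)

/-- The Bernoulli success probability `ϱ_{j,m} = 2^{jμ}(1+‖m‖_∞/2^j)^ν`. -/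
def rhoB (d : ℕ) (μ' ν : ℝ) (j : ℕ) (m : Fin d → ℤ) : ℝ :=
  (2 : ℝ) ^ ((j : ℝ) * μ') * (1 + znorm m / 2 ^ j) ^ ν

/-- Property A. -/
def PropertyA (d : ℕ) (s α β γ θ : ℝ) (p q : ℝ≥0∞) : Prop :=
  (if p = ∞ then γ ≤ 0 else γ < -((d : ℝ) / p.toReal)) ∧
  (if p = ∞ then β ≤ 0 else β < -((d : ℝ) / p.toReal)) ∧
  (s + d / 2 + α < 0 ∨
    (s + d / 2 + α = 0 ∧ (if q = ∞ then θ ≤ 0 else θ < -(1 / q.toReal))))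

/-- Property A'. -/
def PropertyA' (d : ℕ) (s α β γ μ' ν : ℝ) (p q : ℝ≥0∞) : Prop :=
  if p = ∞ then
    γ ≤ 0 ∧ β ≤ 0 ∧
      (if q = ∞ then s + d / 2 + α ≤ 0 else s + d / 2 + α < 0)
  else
    γ + (d + ν) / p.toReal < 0 ∧ β + (d + ν) / p.toReal < 0 ∧
      (if q = ∞ then s + d / 2 + α + μ' / p.toReal ≤ 0
        else s + d / 2 + α + μ' / p.toReal < 0)

/-- Property A''. -/
def PropertyA'' (d : ℕ) (s α β γ μ' ν r : ℝ) (p : ℝ≥0∞) : Prop :=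
  if p = ∞ then γ ≤ 0 ∧ β ≤ 0 ∧ s + d / 2 + α ≤ 0
  else
    γ + (d : ℝ) / p.toReal + ν / max r p.toReal < 0 ∧
    β + (d : ℝ) / p.toReal + ν / max r p.toReal < 0 ∧
    s + (d : ℝ) / 2 + α + μ' / max r p.toReal < 0

/-- The quantity `Ξ = max_t Ξ_t` from the master lemma, for a deterministic family `ξ`,
an exponent `pr ∈ (0,∞)` and an enumeration `φ` of `ℤ^d`. -/
def XiQ (d : ℕ) (pr : ℝ) (φ : ℕ → Fin d → ℤ)
    (ξ : ℕ → (Fin d → Bool) → (Fin d → ℤ) → ℝ) : ℝ≥0∞ :=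
  ⨆ t : Fin d → Bool, ⨆ j : ℕ,
    (ENNReal.ofReal ((Mnum d j : ℝ)⁻¹ *
        ∑ τ ∈ Finset.range (Mnum d j), |ξ j t (φ τ)| ^ pr) +
      ⨆ ℓ : ℕ, ⨆ _ : j ≤ ℓ,
        ENNReal.ofReal ((Nnum d ℓ : ℝ)⁻¹ *
          ∑ τ ∈ Finset.Ico (Mnum d ℓ) (Mnum d (ℓ + 1)), |ξ j t (φ τ)| ^ pr))

/-- The quantity `Ξ̃ = max_t Ξ̃_t` from the Bernoulli master lemma. -/
def XiB (d : ℕ) (pr r μ' ν δ : ℝ) (φ : ℕ → Fin d → ℤ)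
    (lam ξ : ℕ → (Fin d → Bool) → (Fin d → ℤ) → ℝ) : ℝ≥0∞ :=
  ⨆ t : Fin d → Bool, ⨆ j : ℕ,
    (ENNReal.ofReal ((Mnum d j : ℝ)⁻¹ *
        ∑ τ ∈ Finset.range (Mnum d j),
          rhoB d μ' ν j (φ τ) ^ (pr / max r pr * (δ - 1)) * lam j t (φ τ) *
            |ξ j t (φ τ)| ^ pr) +
      ⨆ ℓ : ℕ, ⨆ _ : j ≤ ℓ,
        ENNReal.ofReal ((Nnum d ℓ : ℝ)⁻¹ *
          ∑ τ ∈ Finset.Ico (Mnum d ℓ) (Mnum d (ℓ + 1)),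
            rhoB d μ' ν j (φ τ) ^ (pr / max r pr * (δ - 1)) * lam j t (φ τ) *
              |ξ j t (φ τ)| ^ pr))

/-- `exp(c · x^r)` for `x ∈ [0,∞]`, equal to `∞` for `x = ∞`. -/
def expENN (c r : ℝ) (x : ℝ≥0∞) : ℝ≥0∞ :=
  if x = ∞ then ∞ else ENNReal.ofReal (Real.exp (c * x.toReal ^ r))



section Stmt8Aux
open Filter


lemma auxExpo {x : ℝ} (hx : 0 < x) (u : ℝ) :
    Tendsto (fun j : ℕ => Real.log 2 * ((j:ℝ) * x) + Real.log ((j:ℝ)+1) * u) atTop atTop := by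
  set c : ℝ := Real.log 2 * x with hc
  have hcpos : 0 < c := mul_pos (Real.log_pos one_lt_two) hx
  have hkey : ∀ᶠ j : ℕ in atTop, c / 2 * (j:ℝ) ≤ Real.log 2 * ((j:ℝ) * x) + Real.log ((j:ℝ)+1) * u := by
    have hε : 0 < c / (4 * (|u| + 1)) := by positivity
    have h1 := (tendsto_atTop_add_const_right atTop (1:ℝ)
      tendsto_natCast_atTop_atTop).eventually (Real.isLittleO_log_id_atTop.def hε)
    filter_upwards [h1, eventually_ge_atTop 1] with j hj hj1
    simp only [Function.comp, id] at hj
    have hj1' : (1:ℝ) ≤ (j:ℝ) := by exact_mod_cast hj1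
    have hlog : |Real.log ((j:ℝ)+1)| ≤ c / (4 * (|u| + 1)) * ((j:ℝ)+1) := by
      simpa [abs_of_nonneg (by linarith : (0:ℝ) ≤ (j:ℝ)+1)] using hj
    have h2 : Real.log ((j:ℝ)+1) * u ≥ -(c/2 * (j:ℝ)) := by
      have : Real.log ((j:ℝ)+1) * u ≥ -(|Real.log ((j:ℝ)+1)| * |u|) := by
        have := abs_mul (Real.log ((j:ℝ)+1)) u
        nlinarith [neg_abs_le (Real.log ((j:ℝ)+1) * u)]
      have h3 : |Real.log ((j:ℝ)+1)| * |u| ≤ c / (4 * (|u| + 1)) * ((j:ℝ)+1) * |u| :=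
        mul_le_mul_of_nonneg_right hlog (abs_nonneg u)
      have h4 : c / (4 * (|u| + 1)) * ((j:ℝ)+1) * |u| ≤ c/2 * (j:ℝ) := by
        rw [div_mul_eq_mul_div, div_mul_eq_mul_div, div_le_iff₀ (by positivity)]
        have hu : 0 ≤ |u| := abs_nonneg u
        nlinarith [mul_le_mul_of_nonneg_right (mul_le_mul_of_nonneg_left
            (show (j:ℝ)+1 ≤ 2*(j:ℝ) by linarith) hcpos.le) hu,
          mul_pos hcpos (show (0:ℝ) < (j:ℝ) by linarith)]
      linarith
    have : Real.log 2 * ((j:ℝ) * x) = c * (j:ℝ) := by ring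
    rw [this]
    nlinarith
  exact tendsto_atTop_mono' _ hkey
    (Tendsto.const_mul_atTop (by positivity) tendsto_natCast_atTop_atTop)

lemma auxA1 {x : ℝ} (hx : 0 < x) (u : ℝ) :
    Tendsto (fun j : ℕ => (2:ℝ) ^ ((j:ℝ) * x) * ((j:ℝ) + 1) ^ u) atTop atTop := by
  have heq : ∀ j : ℕ, (2:ℝ) ^ ((j:ℝ) * x) * ((j:ℝ) + 1) ^ u
      = Real.exp (Real.log 2 * ((j:ℝ) * x) + Real.log ((j:ℝ)+1) * u) := by
    intro j
    rw [Real.exp_add, Real.rpow_def_of_pos two_pos, Real.rpow_def_of_pos (by positivity)]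
  simp only [heq]
  exact Real.tendsto_exp_atTop.comp (auxExpo hx u)

lemma auxA2 {u : ℝ} (hu : 0 < u) :
    Tendsto (fun j : ℕ => ((j:ℝ) + 1) ^ u) atTop atTop :=
  (tendsto_rpow_atTop hu).comp
    (tendsto_atTop_add_const_right atTop (1:ℝ) tendsto_natCast_atTop_atTop)

lemma auxA3 {x u C : ℝ} (h : ∀ᶠ j : ℕ in atTop, (2:ℝ)^((j:ℝ)*x) * ((j:ℝ)+1)^u ≤ C) :
    x < 0 ∨ (x = 0 ∧ u ≤ 0) := by
  rcases lt_trichotomy x 0 with h'|h'|h'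
  · exact Or.inl h'
  · refine Or.inr ⟨h', ?_⟩
    by_contra hu
    push_neg at hu
    have h2 := (auxA2 hu).eventually_ge_atTop (C+1)
    subst h'
    obtain ⟨j, hj1, hj2⟩ := (h.and h2).exists
    simp only [mul_zero, Real.rpow_zero, one_mul] at hj1
    linarith
  · exfalso
    obtain ⟨j, hj1, hj2⟩ := (h.and ((auxA1 h' u).eventually_ge_atTop (C+1))).exists
    linarith

lemma auxA4 {x u : ℝ} {f : ℕ → ℝ} (hf : Summable f)
    (h : ∀ᶠ j : ℕ in atTop, (2:ℝ)^((j:ℝ)*x) * ((j:ℝ)+1)^u ≤ f j) :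
    x < 0 ∨ (x = 0 ∧ u < -1) := by
  rcases lt_trichotomy x 0 with h'|h'|h'
  · exact Or.inl h'
  · refine Or.inr ⟨h', ?_⟩
    subst h'
    simp only [mul_zero, Real.rpow_zero, one_mul] at h
    obtain ⟨K, hK⟩ := eventually_atTop.mp h
    have hsum : Summable (fun n : ℕ => ((n:ℝ)+1)^u) := by
      rw [← summable_nat_add_iff K]
      refine Summable.of_nonneg_of_le (fun j => by positivity)
        (fun j => ?_) ((summable_nat_add_iff K).mpr hf)
      have := hK (j + K) (by omega)
      push_cast
      push_cast at this
      linarith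
    have hsum2 : Summable (fun n : ℕ => (n:ℝ)^u) := by
      rw [← summable_nat_add_iff 1]
      refine hsum.congr (fun n => by push_cast; ring_nf)
    exact Real.summable_nat_rpow.mp hsum2
  · exfalso
    have h0 := hf.tendsto_atTop_zero.eventually_lt_const (show (0:ℝ) < 1 by norm_num)
    obtain ⟨j, ⟨hj1, hj2⟩, hj3⟩ :=
      ((h.and h0).and ((auxA1 h' u).eventually_ge_atTop 1)).exists
    linarith



def boxF (d N : ℕ) : Finset (Fin d → ℤ) :=
  Finset.Icc (fun _ => -(N:ℤ)) (fun _ => (N:ℤ))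

lemma znorm_nonneg {d : ℕ} (m : Fin d → ℤ) : 0 ≤ znorm m := Nat.cast_nonneg _

lemma znorm_le_iff {d N : ℕ} {m : Fin d → ℤ} :
    znorm m ≤ (N:ℝ) ↔ ∀ i, (m i).natAbs ≤ N := by
  rw [znorm, Nat.cast_le (α := ℝ), Finset.sup_le_iff]
  simp

lemma mem_boxF {d N : ℕ} {m : Fin d → ℤ} : m ∈ boxF d N ↔ znorm m ≤ (N:ℝ) := by
  rw [boxF, Finset.mem_Icc, znorm_le_iff]
  constructor
  · rintro ⟨h1, h2⟩ i
    have ha := Pi.le_def.mp h1 i; have hb := Pi.le_def.mp h2 i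
    omega
  · intro h
    constructor <;> rw [Pi.le_def] <;> intro i <;> have := h i <;> omega

lemma card_boxF (d N : ℕ) : (boxF d N).card = (2*N+1)^d := by
  rw [boxF, Pi.card_Icc]
  have : ∀ i : Fin d, (Finset.Icc (-(N:ℤ)) (N:ℤ)).card = 2*N+1 := by
    intro i; rw [Int.card_Icc]; omega
  simp [Int.card_Icc]
  congr 1
  omega

def shellF (d k : ℕ) : Finset (Fin d → ℤ) :=
  boxF d (2^(k+1)-1) \ boxF d (2^k-1)

lemma mem_shellF {d k : ℕ} {m : Fin d → ℤ} :
    m ∈ shellF d k ↔ ((2:ℝ)^k ≤ znorm m ∧ znorm m ≤ (2:ℝ)^(k+1) - 1) := by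
  rw [shellF, Finset.mem_sdiff, mem_boxF, mem_boxF]
  have h1 : (((2^(k+1)-1 : ℕ)):ℝ) = (2:ℝ)^(k+1) - 1 := by
    push_cast [Nat.cast_sub (Nat.one_le_two_pow)]; ring
  rw [h1]
  constructor
  · rintro ⟨ha, hb⟩
    refine ⟨?_, ha⟩
    by_contra hc
    push_neg at hc
    apply hb
    have h2 : (((2^k-1 : ℕ)):ℝ) = (2:ℝ)^k - 1 := by
      push_cast [Nat.cast_sub (Nat.one_le_two_pow)]; ring
    rw [h2]
    -- znorm is an integer-valued (nat cast); znorm m < 2^k ⇒ ≤ 2^k - 1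
    rw [znorm]
    rw [znorm] at hc
    have : (Finset.univ.sup fun i => (m i).natAbs) < 2^k := by exact_mod_cast hc
    have : (Finset.univ.sup fun i => (m i).natAbs) ≤ 2^k - 1 := by omega
    calc ((Finset.univ.sup fun i => (m i).natAbs : ℕ):ℝ) ≤ ((2^k-1:ℕ):ℝ) := by exact_mod_cast this
      _ = (2:ℝ)^k - 1 := h2
  · rintro ⟨ha, hb⟩
    refine ⟨hb, ?_⟩
    intro hc
    have h2 : (((2^k-1 : ℕ)):ℝ) = (2:ℝ)^k - 1 := by
      push_cast [Nat.cast_sub (Nat.one_le_two_pow)]; ring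
    rw [h2] at hc
    linarith

lemma boxF_subset {d : ℕ} {N N' : ℕ} (h : N ≤ N') : boxF d N ⊆ boxF d N' := by
  intro m hm
  rw [mem_boxF] at hm ⊢
  exact hm.trans (by exact_mod_cast h)

lemma card_shellF {d k : ℕ} (hd : 0 < d) : 2^(k*d) ≤ (shellF d k).card := by
  rw [shellF, Finset.card_sdiff_of_subset (boxF_subset (by have := Nat.one_le_two_pow (n := k); omega)),
    card_boxF, card_boxF]
  have ha : 1 ≤ 2^k := Nat.one_le_two_pow
  have hb : (1:ℕ) ≤ 2^(k+1) := Nat.one_le_two_pow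
  set a : ℕ := 2*(2^k-1)+1 with hadef
  have h1 : 2*(2^(k+1)-1)+1 = 2*a + 1 := by rw [hadef]; ring_nf; omega
  have h2 : 2^k ≤ a := by omega
  rw [h1]
  have key : a^d + 2^(k*d) ≤ (2*a+1)^d := by
    calc a^d + 2^(k*d) ≤ a^d + a^d := by
          have : 2^(k*d) = (2^k)^d := by rw [pow_mul]
          rw [this]
          exact Nat.add_le_add_left (Nat.pow_le_pow_left h2 d) _
      _ ≤ 2^d * a^d := by
          have : 2 ≤ 2^d := by calc 2 = 2^1 := rfl
                                _ ≤ 2^d := Nat.pow_le_pow_right (by norm_num) hd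
          nlinarith [pow_pos (show 0 < a by omega) d]
      _ = (2*a)^d := by rw [mul_pow]
      _ ≤ (2*a+1)^d := Nat.pow_le_pow_left (by omega) d
  omega

lemma card_shellF_ge {d k : ℕ} (hd : 0 < d) : 2^k ≤ (shellF d k).card :=
  le_trans (Nat.pow_le_pow_right (by norm_num) (by nlinarith)) (card_shellF hd)


lemma shellF_disjoint {d : ℕ} {k k' : ℕ} (h : k ≠ k') :
    Disjoint (shellF d k) (shellF d k') := by
  wlog hlt : k < k' generalizing k k'
  · exact (this h.symm (by omega)).symm
  rw [Finset.disjoint_left]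
  intro m hm hm'
  rw [mem_shellF] at hm hm'
  have h1 : (2:ℝ)^(k+1) ≤ (2:ℝ)^k' := by
    apply pow_le_pow_right₀ one_le_two
    omega
  linarith [hm.2, hm'.1]

variable {Ω ι : Type*} [MeasurableSpace Ω] {μ : Measure Ω} [IsProbabilityMeasure μ]

lemma counting_lemma (ξ : ι → Ω → ℝ) (hmeas : ∀ i, Measurable (ξ i))
    (hindep : iIndepFun ξ μ) (c : ℝ)
    (E : ℝ≥0∞) (hE : ∀ i, μ {ω | c ≤ |ξ i ω|} = E) (hEpos : 0 < E.toReal)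
    (S : ℕ → Finset ι) (hS : ∀ k, 2^k ≤ (S k).card) :
    ∀ᵐ ω ∂μ, ∀ᶠ k in atTop,
      E.toReal/2 * ((S k).card : ℝ) ≤ (((S k).filter (fun i => c ≤ |ξ i ω|)).card : ℝ) := by
  classical
  set ε := E.toReal with hεdef
  set g : ℝ → ℝ := fun x => if c ≤ |x| then 1 else 0 with hg
  have hgmeas : Measurable g := by
    apply Measurable.ite _ measurable_const measurable_const
    exact measurableSet_le measurable_const measurable_abs
  set Y : ι → Ω → ℝ := fun i => g ∘ ξ i with hY
  have hYmeas : ∀ i, Measurable (Y i) := fun i => hgmeas.comp (hmeas i)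
  have hYindep : iIndepFun Y μ :=
    hindep.comp (fun _ => g) (fun _ => hgmeas)
  have hY01 : ∀ i ω, Y i ω = 0 ∨ Y i ω = 1 := by
    intro i ω
    simp only [hY, hg, Function.comp]
    split <;> simp
  have hYLp : ∀ i, MemLp (Y i) 2 μ := by
    intro i
    refine MemLp.of_bound (hYmeas i).aestronglyMeasurable 1 (ae_of_all _ fun ω => ?_)
    rcases hY01 i ω with h | h <;> rw [h] <;> simp
  have hYint : ∀ i, μ[Y i] = ε := by
    intro i
    have hind : Y i = Set.indicator {ω | c ≤ |ξ i ω|} (fun _ => (1:ℝ)) := by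
      funext ω
      simp only [hY, hg, Function.comp, Set.indicator_apply, Set.mem_setOf_eq]
    have hs : MeasurableSet {ω | c ≤ |ξ i ω|} :=
      measurableSet_le measurable_const (hmeas i).abs
    rw [hind, integral_indicator_const _ hs, Measure.real, hE i, smul_eq_mul, mul_one]
  obtain ⟨i₀, _⟩ := Finset.card_pos.mp (lt_of_lt_of_le (by norm_num) (hS 0))
  have hε1 : ε ≤ 1 := by
    rw [hεdef, ← ENNReal.toReal_one]
    exact ENNReal.toReal_mono (by simp) ((hE i₀) ▸ prob_le_one)
  have hYvar : ∀ i, variance (Y i) μ ≤ 1 := by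
    intro i
    have hsq : Y i ^ 2 = Y i := by
      funext ω
      rcases hY01 i ω with h | h <;> simp [h]
    rw [variance_eq_sub (hYLp i), hsq, hYint i]
    nlinarith [sq_nonneg (ε - 1), sq_nonneg ε]
  set N : ℕ → Ω → ℝ := fun k => ∑ i ∈ S k, Y i with hN
  have hNLp : ∀ k, MemLp (N k) 2 μ := fun k => memLp_finsetSum' _ (fun i _ => hYLp i)
  have hNint : ∀ k, μ[N k] = ε * ((S k).card : ℝ) := by
    intro k
    have : N k = fun ω => ∑ i ∈ S k, Y i ω := by
      funext ω; rw [hN]; simp [Finset.sum_apply]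
    rw [this, integral_finset_sum _ (fun i _ => (hYLp i).integrable one_le_two)]
    simp only [hYint, Finset.sum_const, nsmul_eq_mul]
    ring
  have hNvar : ∀ k, variance (N k) μ ≤ ((S k).card : ℝ) := by
    intro k
    rw [hN, IndepFun.variance_sum (fun i _ => hYLp i)
      (fun i _ j _ hij => hYindep.indepFun hij)]
    calc ∑ i ∈ S k, variance (Y i) μ ≤ ∑ _i ∈ S k, (1:ℝ) :=
          Finset.sum_le_sum (fun i _ => hYvar i)
      _ = ((S k).card : ℝ) := by simp
  set A : ℕ → Set Ω := fun k => {ω | ε * ((S k).card : ℝ) / 2 ≤ |N k ω - μ[N k]|} with hA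
  have hSpos : ∀ k, (0:ℝ) < ((S k).card : ℝ) := by
    intro k
    exact_mod_cast lt_of_lt_of_le (pow_pos (by norm_num) k) (hS k)
  have hcheb : ∀ k, μ (A k) ≤ ENNReal.ofReal (4 / ε^2) * 2⁻¹ ^ k := by
    intro k
    have hpos : 0 < ε * ((S k).card : ℝ) / 2 :=
      div_pos (mul_pos hEpos (hSpos k)) two_pos
    have h1 := meas_ge_le_variance_div_sq (hNLp k) hpos
    refine le_trans h1 ?_
    have h2k : (2:ℝ)^k ≤ ((S k).card : ℝ) := by exact_mod_cast hS k
    have hε2 : (0:ℝ) < ε^2 := pow_pos hEpos 2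
    have hhalf : (1/2:ℝ)^k * (2:ℝ)^k = 1 := by rw [← mul_pow]; norm_num
    have hb : variance (N k) μ / (ε * ((S k).card : ℝ) / 2)^2 ≤ 4 / ε^2 * (1/2)^k := by
      rw [div_le_iff₀ (pow_pos hpos 2)]
      have hv := hNvar k
      have expand : 4/ε^2*((1/2:ℝ))^k * (ε*((S k).card:ℝ)/2)^2
          = (1/2)^k * ((S k).card:ℝ)^2 := by
        field_simp
        ring
      rw [expand]
      have hh : (1:ℝ) ≤ (1/2)^k * ((S k).card:ℝ) := by
        calc (1:ℝ) = (1/2)^k * (2:ℝ)^k := hhalf.symm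
          _ ≤ (1/2)^k * ((S k).card:ℝ) :=
            mul_le_mul_of_nonneg_left h2k (by positivity)
      calc variance (N k) μ ≤ ((S k).card:ℝ) := hv
        _ = 1 * ((S k).card:ℝ) := (one_mul _).symm
        _ ≤ ((1/2)^k * ((S k).card:ℝ)) * ((S k).card:ℝ) :=
            mul_le_mul_of_nonneg_right hh (hSpos k).le
        _ = (1/2)^k * ((S k).card:ℝ)^2 := by ring
    refine le_trans (ENNReal.ofReal_le_ofReal hb) ?_
    rw [ENNReal.ofReal_mul (div_nonneg (by norm_num) (sq_nonneg ε))]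
    gcongr
    rw [ENNReal.ofReal_pow (by norm_num)]
    gcongr
    rw [show (1/2:ℝ) = (2:ℝ)⁻¹ by norm_num, ENNReal.ofReal_inv_of_pos (by norm_num)]
    norm_num
  have hsum : (∑' k, μ (A k)) ≠ ∞ := by
    refine ne_top_of_le_ne_top ?_ (ENNReal.tsum_le_tsum hcheb)
    rw [ENNReal.tsum_mul_left]
    refine ENNReal.mul_ne_top ENNReal.ofReal_ne_top ?_
    rw [ENNReal.tsum_geometric]
    simp [ENNReal.sub_ne_top]
  filter_upwards [ae_eventually_notMem hsum] with ω hω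
  filter_upwards [hω] with k hk
  have hcount : (((S k).filter (fun i => c ≤ |ξ i ω|)).card : ℝ) = N k ω := by
    rw [hN]
    simp only [Finset.sum_apply]
    rw [← Finset.sum_boole]
    congr 1
  have hk' : |N k ω - μ[N k]| < ε * ((S k).card : ℝ) / 2 := by
    by_contra hcon
    exact hk (by rw [hA]; exact Set.mem_setOf_eq ▸ le_of_not_gt hcon)
  rw [hNint k] at hk'
  rw [hcount]
  have := neg_abs_le (N k ω - ε * ((S k).card : ℝ))
  have habs := abs_lt.mp hk'
  linarith [habs.1]




lemma base_pos {d : ℕ} (j : ℕ) (m : Fin d → ℤ) : (0:ℝ) < 1 + znorm m / 2^j := by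
  have h1 := znorm_nonneg m
  have h2 : (0:ℝ) < 2^j := by positivity
  have : 0 ≤ znorm m / 2^j := div_nonneg h1 h2.le
  linarith

lemma base_one_le {d : ℕ} (j : ℕ) (m : Fin d → ℤ) : (1:ℝ) ≤ 1 + znorm m / 2^j := by
  have h1 := znorm_nonneg m
  have h2 : (0:ℝ) < 2^j := by positivity
  have : 0 ≤ znorm m / 2^j := div_nonneg h1 h2.le
  linarith

lemma priorCoef_pos {d : ℕ} (α β γ θ : ℝ) (j : ℕ) (m : Fin d → ℤ) :
    0 < priorCoef d α β γ θ j m := by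
  unfold priorCoef
  exact mul_pos (mul_pos (Real.rpow_pos_of_pos two_pos _)
    (Real.rpow_pos_of_pos (by positivity) _))
    (Real.rpow_pos_of_pos (base_pos j m) _)

/-- if `1 ≤ z` and `z ≤ B` then `B ^ min e 0 ≤ z ^ e`. -/
lemma rpow_min_le_rpow {z B e : ℝ} (h1 : 1 ≤ z) (h2 : z ≤ B) :
    B ^ (min e 0) ≤ z ^ e := by
  rcases le_or_gt 0 e with he | he
  · rw [min_eq_right he]
    rw [Real.rpow_zero]
    calc (1:ℝ) = 1 ^ e := (Real.one_rpow e).symm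
      _ ≤ z ^ e := Real.rpow_le_rpow zero_le_one h1 he
  · rw [min_eq_left he.le]
    exact Real.rpow_le_rpow_of_nonpos (by linarith) h2 he.le

lemma lpNorm_ne_top_elt {q : ℝ≥0∞} (hq0 : 0 < q) {ι : Type*} {F : ι → ℝ≥0∞}
    (h : lpNorm q F ≠ ⊤) (i : ι) : F i ≠ ⊤ := by
  unfold _root_.lpNorm at h
  split_ifs at h with hq
  · exact ne_top_of_le_ne_top h (le_iSup F i)
  · have hqr : 0 < q.toReal := ENNReal.toReal_pos hq0.ne' hq
    have h1 : (∑' i, F i ^ q.toReal) ≠ ⊤ := by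
      intro hcon
      rw [hcon] at h
      rw [ENNReal.top_rpow_of_pos (by positivity)] at h
      exact h rfl
    have h2 : F i ^ q.toReal ≠ ⊤ := ne_top_of_le_ne_top h1 (ENNReal.le_tsum i)
    intro hcon
    rw [hcon, ENNReal.top_rpow_of_pos hqr] at h2
    exact h2 rfl

lemma lpNorm_tsum_ne_top {q : ℝ≥0∞} (hq0 : 0 < q) (hq : q ≠ ⊤) {ι : Type*} {F : ι → ℝ≥0∞}
    (h : lpNorm q F ≠ ⊤) : (∑' i, F i ^ q.toReal) ≠ ⊤ := by
  unfold _root_.lpNorm at h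
  rw [if_neg hq] at h
  intro hcon
  rw [hcon] at h
  have hqr : 0 < q.toReal := ENNReal.toReal_pos hq0.ne' hq
  rw [ENNReal.top_rpow_of_pos (by positivity)] at h
  exact h rfl

lemma le_lpNorm_top {ι : Type*} (F : ι → ℝ≥0∞) (i : ι) : F i ≤ lpNorm ⊤ F := by
  unfold _root_.lpNorm
  rw [if_pos rfl]
  exact le_iSup F i

lemma priorCoef_ge_shell {d : ℕ} (α β γ θ : ℝ) {j₀ k : ℕ} (hj₀ : j₀ ≤ 1)
    {m : Fin d → ℤ} (hm : m ∈ shellF d k) :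
    (2:ℝ)^((j₀:ℝ)*α) * ((j₀:ℝ)+1)^θ * ((2:ℝ)^(k+2))^(min (if j₀ = 0 then γ else β) 0)
      ≤ priorCoef d α β γ θ j₀ m := by
  unfold priorCoef
  apply mul_le_mul_of_nonneg_left _
    (_root_.mul_pos (Real.rpow_pos_of_pos two_pos _)
      (Real.rpow_pos_of_pos (by positivity) _)).le
  apply rpow_min_le_rpow (base_one_le _ _)
  rw [mem_shellF] at hm
  have h2 : (1:ℝ) ≤ 2^j₀ := one_le_pow₀ one_le_two
  have h1 : znorm m / 2^j₀ ≤ znorm m := div_le_self (znorm_nonneg m) h2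
  calc 1 + znorm m / 2^j₀ ≤ 1 + znorm m := by linarith
    _ ≤ 1 + ((2:ℝ)^(k+1) - 1) := by linarith [hm.2]
    _ = (2:ℝ)^(k+1) := by ring
    _ ≤ (2:ℝ)^(k+2) := pow_le_pow_right₀ one_le_two (by omega)

lemma priorCoef_ge_box {d : ℕ} (α β γ θ : ℝ) {j : ℕ} (hj : j ≠ 0)
    {m : Fin d → ℤ} (hm : m ∈ boxF d (2^j)) :
    (2:ℝ)^((j:ℝ)*α) * ((j:ℝ)+1)^θ * (2:ℝ)^(min β 0)
      ≤ priorCoef d α β γ θ j m := by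
  unfold priorCoef
  rw [if_neg hj]
  apply mul_le_mul_of_nonneg_left _
    (_root_.mul_pos (Real.rpow_pos_of_pos two_pos _)
      (Real.rpow_pos_of_pos (by positivity) _)).le
  have := rpow_min_le_rpow (z := 1 + znorm m / 2^j) (B := 2) (e := β)
    (base_one_le _ _) ?_
  · simpa using this
  · rw [mem_boxF] at hm
    have hc : ((2^j : ℕ):ℝ) = (2:ℝ)^j := by push_cast; ring
    rw [hc] at hm
    have h2 : (0:ℝ) < 2^j := by positivity
    have := (div_le_one h2).mpr hm
    linarith



open Filter in
lemma shell_real_lb {ε c A0 b pr : ℝ} {d : ℕ}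
    (hε : 0 < ε) (hc : 0 < c) (hA0 : 0 < A0) (hpr : 0 < pr) (hbpr : -(d:ℝ) ≤ b * pr)
    (k : ℕ) {cnt S : ℝ} (hS : (2:ℝ)^(k*d) ≤ S) (hcnt : ε/2 * S ≤ cnt) :
    ε/2 * ((c*A0)^pr * (2:ℝ)^(2*(b*pr))) ≤ cnt * (c*A0*((2:ℝ)^(k+2))^b)^pr := by
  have h20 : (0:ℝ) ≤ 2 := by norm_num
  have hcA : (0:ℝ) < c * A0 := _root_.mul_pos hc hA0
  have hv : (c*A0*((2:ℝ)^(k+2))^b)^pr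
      = (c*A0)^pr * (2:ℝ)^((((k+2):ℕ):ℝ)*(b*pr)) := by
    rw [Real.mul_rpow hcA.le (Real.rpow_nonneg (by positivity) b),
      ← Real.rpow_natCast (2:ℝ) (k+2), ← Real.rpow_mul h20, ← Real.rpow_mul h20]
    congr 1
    ring
  have hstep : (2:ℝ)^(2*(b*pr))
      ≤ (2:ℝ)^(((k*d:ℕ)):ℝ) * (2:ℝ)^((((k+2):ℕ):ℝ)*(b*pr)) := by
    rw [← Real.rpow_add two_pos]
    apply Real.rpow_le_rpow_of_exponent_le one_le_two
    push_cast
    have hk0 : (0:ℝ) ≤ (k:ℝ) := Nat.cast_nonneg k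
    nlinarith
  have hS' : (2:ℝ)^(((k*d:ℕ)):ℝ) ≤ S := by rw [Real.rpow_natCast]; exact hS
  have hSpos : (0:ℝ) < S := lt_of_lt_of_le (by positivity) hS
  calc ε/2 * ((c*A0)^pr * (2:ℝ)^(2*(b*pr)))
      ≤ ε/2 * ((c*A0)^pr * ((2:ℝ)^(((k*d:ℕ)):ℝ) * (2:ℝ)^((((k+2):ℕ):ℝ)*(b*pr)))) := by
        apply mul_le_mul_of_nonneg_left _ (by positivity)
        exact mul_le_mul_of_nonneg_left hstep (Real.rpow_nonneg hcA.le pr)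
    _ = (ε/2 * (2:ℝ)^(((k*d:ℕ)):ℝ)) * ((c*A0)^pr * (2:ℝ)^((((k+2):ℕ):ℝ)*(b*pr))) := by
        ring
    _ ≤ (ε/2 * S) * ((c*A0)^pr * (2:ℝ)^((((k+2):ℕ):ℝ)*(b*pr))) := by
        apply mul_le_mul_of_nonneg_right _ (by positivity)
        exact mul_le_mul_of_nonneg_left hS' (by positivity)
    _ ≤ cnt * ((c*A0)^pr * (2:ℝ)^((((k+2):ℕ):ℝ)*(b*pr))) :=
        mul_le_mul_of_nonneg_right hcnt (by positivity)
    _ = cnt * (c*A0*((2:ℝ)^(k+2))^b)^pr := by rw [hv]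

open Filter in
lemma gammaBeta_fin {d : ℕ} (hd : 0 < d) (α β γ θ : ℝ) {j₀ : ℕ} (hj₀ : j₀ ≤ 1)
    {pr : ℝ} (hpr : 0 < pr) {z : (Fin d → ℤ) → ℝ} {c ε : ℝ} (hc : 0 < c) (hε : 0 < ε)
    (hcount : ∀ᶠ k in atTop, ε/2 * ((shellF d k).card:ℝ) ≤
       (((shellF d k).filter (fun m => c ≤ |z m|)).card : ℝ))
    (hT : (∑' m : Fin d → ℤ, (ENNReal.ofReal |priorCoef d α β γ θ j₀ m * z m|) ^ pr) ≠ ⊤) :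
    (if j₀ = 0 then γ else β) < -((d:ℝ)/pr) := by
  classical
  by_contra hcon
  push_neg at hcon
  set e := if j₀ = 0 then γ else β with he
  set b := min e 0 with hb
  have hdpr : (0:ℝ) ≤ (d:ℝ)/pr := by positivity
  have hbpr : -(d:ℝ) ≤ b * pr := by
    have h0 : -((d:ℝ)/pr) ≤ b := le_min hcon (by linarith)
    calc -(d:ℝ) = (-((d:ℝ)/pr)) * pr := by field_simp
      _ ≤ b * pr := mul_le_mul_of_nonneg_right h0 hpr.le
  set A0 : ℝ := (2:ℝ)^((j₀:ℝ)*α) * ((j₀:ℝ)+1)^θ with hA0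
  have hA0pos : 0 < A0 := _root_.mul_pos (Real.rpow_pos_of_pos two_pos _)
    (Real.rpow_pos_of_pos (by positivity) _)
  set C0r : ℝ := ε/2 * ((c*A0)^pr * (2:ℝ)^(2*(b*pr))) with hC0r
  have hC0rpos : 0 < C0r := by
    rw [hC0r]
    have h1 : (0:ℝ) < (c*A0)^pr := Real.rpow_pos_of_pos (by positivity) _
    have h2 : (0:ℝ) < (2:ℝ)^(2*(b*pr)) := Real.rpow_pos_of_pos two_pos _
    positivity
  obtain ⟨K, hK⟩ := eventually_atTop.mp hcount
  set G : ℕ → Finset (Fin d → ℤ) := fun k => (shellF d k).filter (fun m => c ≤ |z m|)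
    with hG
  have hshell : ∀ k, K ≤ k → ENNReal.ofReal C0r ≤
      ∑ m ∈ G k, (ENNReal.ofReal |priorCoef d α β γ θ j₀ m * z m|) ^ pr := by
    intro k hk
    set v : ℝ≥0∞ := ENNReal.ofReal ((c*A0*((2:ℝ)^(k+2))^b)^pr) with hv
    have hvle : ∀ m ∈ G k,
        v ≤ (ENNReal.ofReal |priorCoef d α β γ θ j₀ m * z m|) ^ pr := by
      intro m hm
      rw [hG, Finset.mem_filter] at hm
      have hcoef := priorCoef_ge_shell (d := d) α β γ θ (k := k) hj₀ hm.1
      rw [← he, ← hb, ← hA0] at hcoef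
      have habs : c*A0*((2:ℝ)^(k+2))^b ≤ |priorCoef d α β γ θ j₀ m * z m| := by
        rw [abs_mul, abs_of_pos (priorCoef_pos α β γ θ j₀ m)]
        calc c*A0*((2:ℝ)^(k+2))^b = (A0*((2:ℝ)^(k+2))^b) * c := by ring
          _ ≤ priorCoef d α β γ θ j₀ m * |z m| := by
              apply mul_le_mul _ hm.2 hc.le (priorCoef_pos α β γ θ j₀ m).le
              calc A0*((2:ℝ)^(k+2))^b = A0 * ((2:ℝ)^(k+2))^b := rfl
                _ ≤ priorCoef d α β γ θ j₀ m := by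
                    have := hcoef
                    linarith [this]
      rw [hv, ← ENNReal.ofReal_rpow_of_pos (by positivity)]
      exact ENNReal.rpow_le_rpow (ENNReal.ofReal_le_ofReal habs) hpr.le
    have hsum := Finset.card_nsmul_le_sum (G k) _ v hvle
    refine le_trans ?_ hsum
    rw [nsmul_eq_mul]
    have hcnt := hK k hk
    have hcard : (2:ℝ)^(k*d) ≤ ((shellF d k).card : ℝ) := by
      exact_mod_cast card_shellF (k := k) hd
    have hreal : C0r ≤ ((G k).card : ℝ) * ((c*A0*((2:ℝ)^(k+2))^b)^pr) := by
      rw [hC0r]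
      exact shell_real_lb hε hc hA0pos hpr hbpr k hcard hcnt
    calc ENNReal.ofReal C0r
        ≤ ENNReal.ofReal (((G k).card : ℝ) * ((c*A0*((2:ℝ)^(k+2))^b)^pr)) :=
          ENNReal.ofReal_le_ofReal hreal
      _ = ENNReal.ofReal ((G k).card : ℝ) * v := by
          rw [ENNReal.ofReal_mul (Nat.cast_nonneg _), hv]
      _ = ((G k).card : ℝ≥0∞) * v := by rw [ENNReal.ofReal_natCast]
  have hacc : ∀ n : ℕ, (n : ℝ≥0∞) * ENNReal.ofReal C0r ≤
      ∑' m, (ENNReal.ofReal |priorCoef d α β γ θ j₀ m * z m|) ^ pr := by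
    intro n
    have hdisj : (↑(Finset.Ico K (K+n)) : Set ℕ).Pairwise (Function.onFun Disjoint G) :=
      fun k _ k' _ hkk' => Finset.disjoint_filter_filter (shellF_disjoint hkk')
    calc (n : ℝ≥0∞) * ENNReal.ofReal C0r
        = ∑ _k ∈ Finset.Ico K (K+n), ENNReal.ofReal C0r := by
          rw [Finset.sum_const, Nat.card_Ico, add_tsub_cancel_left, nsmul_eq_mul]
      _ ≤ ∑ k ∈ Finset.Ico K (K+n),
            ∑ m ∈ G k, (ENNReal.ofReal |priorCoef d α β γ θ j₀ m * z m|) ^ pr :=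
          Finset.sum_le_sum (fun k hk => hshell k (Finset.mem_Ico.mp hk).1)
      _ = ∑ m ∈ (Finset.Ico K (K+n)).biUnion G,
            (ENNReal.ofReal |priorCoef d α β γ θ j₀ m * z m|) ^ pr :=
          (Finset.sum_biUnion hdisj).symm
      _ ≤ ∑' m, (ENNReal.ofReal |priorCoef d α β γ θ j₀ m * z m|) ^ pr :=
          ENNReal.sum_le_tsum _
  have hC0ne : ENNReal.ofReal C0r ≠ 0 := (ENNReal.ofReal_pos.mpr hC0rpos).ne'
  obtain ⟨n, hn⟩ := ENNReal.exists_nat_gt (ENNReal.div_lt_top hT hC0ne).ne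
  rw [ENNReal.div_lt_iff (Or.inl hC0ne) (Or.inl ENNReal.ofReal_ne_top)] at hn
  exact absurd (hacc n) (not_le.mpr hn)

open Filter in
lemma gammaBeta_sup {d : ℕ} (hd : 0 < d) (α β γ θ : ℝ) {j₀ : ℕ} (hj₀ : j₀ ≤ 1)
    {z : (Fin d → ℤ) → ℝ} {c ε : ℝ} (hc : 0 < c) (hε : 0 < ε)
    (hcount : ∀ᶠ k in atTop, ε/2 * ((shellF d k).card:ℝ) ≤
       (((shellF d k).filter (fun m => c ≤ |z m|)).card : ℝ))
    (hT : (⨆ m : Fin d → ℤ, ENNReal.ofReal |priorCoef d α β γ θ j₀ m * z m|) ≠ ⊤) :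
    (if j₀ = 0 then γ else β) ≤ 0 := by
  classical
  by_contra hcon
  push_neg at hcon
  set e := if j₀ = 0 then γ else β with he
  set A0 : ℝ := (2:ℝ)^((j₀:ℝ)*α) * ((j₀:ℝ)+1)^θ with hA0
  have hA0pos : 0 < A0 := _root_.mul_pos (Real.rpow_pos_of_pos two_pos _)
    (Real.rpow_pos_of_pos (by positivity) _)
  set B := (⨆ m : Fin d → ℤ, ENNReal.ofReal |priorCoef d α β γ θ j₀ m * z m|).toReal
    with hB
  have htend : Tendsto (fun k : ℕ => c * A0 * ((2:ℝ)^k/2)^e) atTop atTop := by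
    apply Tendsto.const_mul_atTop (_root_.mul_pos hc hA0pos)
    exact (tendsto_rpow_atTop hcon).comp
      ((tendsto_pow_atTop_atTop_of_one_lt (by norm_num : (1:ℝ) < 2)).atTop_div_const two_pos)
  obtain ⟨k, hk1, hk2⟩ := (hcount.and (htend.eventually_gt_atTop B)).exists
  have hcardpos : 0 < ((shellF d k).filter (fun m => c ≤ |z m|)).card := by
    by_contra hzero
    push_neg at hzero
    have h0 : ((shellF d k).filter (fun m => c ≤ |z m|)).card = 0 := by omega
    have hcardS : (0:ℝ) < ((shellF d k).card : ℝ) := by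
      have h1 := card_shellF (d := d) (k := k) hd
      have h2 : 0 < (shellF d k).card := lt_of_lt_of_le (pow_pos (by norm_num) _) h1
      exact_mod_cast h2
    rw [h0] at hk1
    simp only [Nat.cast_zero] at hk1
    nlinarith
  obtain ⟨m, hm⟩ := Finset.card_pos.mp hcardpos
  rw [Finset.mem_filter] at hm
  have hzn : (2:ℝ)^k ≤ znorm m := ((mem_shellF).mp hm.1).1
  have hbase : (2:ℝ)^k/2 ≤ 1 + znorm m / 2^j₀ := by
    have h1 : znorm m / 2 ≤ znorm m / 2^j₀ := by
      gcongr
      · exact znorm_nonneg m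
      · calc (2:ℝ)^j₀ ≤ 2^1 := pow_le_pow_right₀ one_le_two hj₀
          _ = 2 := pow_one 2
    have h2 : (2:ℝ)^k/2 ≤ znorm m / 2 := by linarith
    linarith
  have hcoef : A0 * ((1 + znorm m / 2^j₀)^e) ≤ priorCoef d α β γ θ j₀ m := by
    unfold priorCoef
    rw [← he, ← hA0]
  have hcoefval : c * A0 * ((2:ℝ)^k/2)^e ≤ |priorCoef d α β γ θ j₀ m * z m| := by
    rw [abs_mul, abs_of_pos (priorCoef_pos α β γ θ j₀ m)]
    have h1 : ((2:ℝ)^k/2)^e ≤ (1 + znorm m / 2^j₀)^e :=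
      Real.rpow_le_rpow (by positivity) hbase hcon.le
    calc c * A0 * ((2:ℝ)^k/2)^e = A0 * ((2:ℝ)^k/2)^e * c := by ring
      _ ≤ priorCoef d α β γ θ j₀ m * |z m| := by
          apply mul_le_mul _ hm.2 hc.le (priorCoef_pos α β γ θ j₀ m).le
          calc A0 * ((2:ℝ)^k/2)^e ≤ A0 * (1 + znorm m / 2^j₀)^e :=
                mul_le_mul_of_nonneg_left h1 hA0pos.le
            _ ≤ priorCoef d α β γ θ j₀ m := hcoef
  have hle : ENNReal.ofReal (c * A0 * ((2:ℝ)^k/2)^e)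
      ≤ ⨆ m' : Fin d → ℤ, ENNReal.ofReal |priorCoef d α β γ θ j₀ m' * z m'| :=
    le_trans (ENNReal.ofReal_le_ofReal hcoefval)
      (le_iSup (fun m' => ENNReal.ofReal |priorCoef d α β γ θ j₀ m' * z m'|) m)
  rw [ENNReal.ofReal_le_iff_le_toReal hT] at hle
  exact absurd hle (not_le.mpr hk2)

open Filter in
lemma main_sum {qr : ℝ} (hqr : 0 < qr) {G : ℕ → ℝ≥0∞} {C x u : ℝ} (hC : 0 < C)
    (hT : (∑' j, G j ^ qr) ≠ ⊤)
    (hlow : ∀ᶠ j : ℕ in atTop,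
      ENNReal.ofReal (C * (2:ℝ)^((j:ℝ)*x) * ((j:ℝ)+1)^u) ≤ G j) :
    x < 0 ∨ (x = 0 ∧ u < -(1/qr)) := by
  have hsumm : Summable (fun j => (G j ^ qr).toReal) := ENNReal.summable_toReal hT
  set Cq : ℝ := C ^ qr with hCq
  have hCqpos : 0 < Cq := Real.rpow_pos_of_pos hC _
  have hsumm2 : Summable (fun j => (G j ^ qr).toReal / Cq) := hsumm.div_const _
  have hkey : ∀ᶠ j : ℕ in atTop,
      (2:ℝ)^((j:ℝ)*(x*qr)) * ((j:ℝ)+1)^(u*qr) ≤ (G j ^ qr).toReal / Cq := by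
    filter_upwards [hlow] with j hj
    have hGfin : G j ^ qr ≠ ⊤ := ne_top_of_le_ne_top hT (ENNReal.le_tsum j)
    rw [le_div_iff₀ hCqpos]
    have hr : (0:ℝ) < C * (2:ℝ)^((j:ℝ)*x) * ((j:ℝ)+1)^u := by positivity
    have h1 : (ENNReal.ofReal (C * (2:ℝ)^((j:ℝ)*x) * ((j:ℝ)+1)^u))^qr ≤ G j ^ qr :=
      ENNReal.rpow_le_rpow hj hqr.le
    rw [ENNReal.ofReal_rpow_of_pos hr] at h1
    have h2 := ENNReal.toReal_mono hGfin h1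
    rw [ENNReal.toReal_ofReal (Real.rpow_nonneg hr.le _)] at h2
    refine le_trans (le_of_eq ?_) h2
    rw [Real.mul_rpow (by positivity) (by positivity),
      Real.mul_rpow (by positivity) (by positivity),
      ← Real.rpow_mul (by norm_num : (0:ℝ) ≤ 2),
      ← Real.rpow_mul (by positivity)]
    rw [hCq]
    ring_nf
  rcases auxA4 hsumm2 hkey with h | ⟨h1, h2⟩
  · left
    by_contra hcontra
    push_neg at hcontra
    nlinarith
  · right
    have hx : x = 0 := by
      rcases mul_eq_zero.mp h1 with h | h
      exacts [h, absurd h hqr.ne']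
    refine ⟨hx, ?_⟩
    calc u = (u*qr)/qr := by field_simp
      _ < (-1)/qr := by gcongr
      _ = -(1/qr) := by ring

open Filter in
lemma main_sup {G : ℕ → ℝ≥0∞} {B : ℝ≥0∞} (hB : B ≠ ⊤) {C x u : ℝ} (hC : 0 < C)
    (hbd : ∀ j, G j ≤ B)
    (hlow : ∀ᶠ j : ℕ in atTop,
      ENNReal.ofReal (C * (2:ℝ)^((j:ℝ)*x) * ((j:ℝ)+1)^u) ≤ G j) :
    x < 0 ∨ (x = 0 ∧ u ≤ 0) := by
  apply auxA3 (C := B.toReal / C)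
  filter_upwards [hlow] with j hj
  have h1 : ENNReal.ofReal (C * (2:ℝ)^((j:ℝ)*x) * ((j:ℝ)+1)^u) ≤ B :=
    le_trans hj (hbd j)
  rw [ENNReal.ofReal_le_iff_le_toReal hB] at h1
  rw [le_div_iff₀ hC]
  calc (2:ℝ)^((j:ℝ)*x) * ((j:ℝ)+1)^u * C
      = C * (2:ℝ)^((j:ℝ)*x) * ((j:ℝ)+1)^u := by ring
    _ ≤ B.toReal := h1

lemma box_lower_real {ε c cB pr : ℝ} {d : ℕ} (hε : 0 < ε) (hc : 0 < c) (hcB : 0 < cB)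
    (hpr : 0 < pr) (α θ σ x : ℝ) (hσx : σ + (d:ℝ)/pr + α = x) (j : ℕ)
    {Mj : ℝ} (hMj : (2:ℝ)^(j*d) ≤ Mj) :
    ((ε/2)^(1/pr) * c * cB) * (2:ℝ)^((j:ℝ)*x) * ((j:ℝ)+1)^θ
      ≤ (2:ℝ)^((j:ℝ)*σ) *
        ((ε/2) * Mj * ((c * ((2:ℝ)^((j:ℝ)*α) * (((j:ℝ)+1))^θ) * cB))^pr)^(1/pr) := by
  have hMpos : (0:ℝ) < Mj := lt_of_lt_of_le (by positivity) hMj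
  have hA : (0:ℝ) < (2:ℝ)^((j:ℝ)*α) * (((j:ℝ)+1))^θ := by positivity
  have hX : (0:ℝ) < c * ((2:ℝ)^((j:ℝ)*α) * (((j:ℝ)+1))^θ) * cB := by positivity
  have hr1 : ((ε/2) * Mj * ((c * ((2:ℝ)^((j:ℝ)*α) * (((j:ℝ)+1))^θ) * cB))^pr)^(1/pr)
      = (ε/2)^(1/pr) * Mj^(1/pr) * (c * ((2:ℝ)^((j:ℝ)*α) * (((j:ℝ)+1))^θ) * cB) := by
    rw [Real.mul_rpow (by positivity) (Real.rpow_nonneg hX.le pr),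
      Real.mul_rpow (by positivity) hMpos.le,
      ← Real.rpow_mul hX.le, mul_one_div_cancel hpr.ne', Real.rpow_one]
  rw [hr1]
  have hM : (2:ℝ)^((((j*d:ℕ)):ℝ) * (1/pr)) ≤ Mj^(1/pr) := by
    have h1 : (2:ℝ)^((((j*d:ℕ)):ℝ)) ≤ Mj := by rw [Real.rpow_natCast]; exact hMj
    have h2 := Real.rpow_le_rpow (by positivity) h1 (by positivity : (0:ℝ) ≤ 1/pr)
    rwa [← Real.rpow_mul (by norm_num : (0:ℝ) ≤ 2)] at h2
  have hexp : (2:ℝ)^((j:ℝ)*x)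
      = (2:ℝ)^((j:ℝ)*σ) * (2:ℝ)^((((j*d:ℕ)):ℝ)*(1/pr)) * (2:ℝ)^((j:ℝ)*α) := by
    rw [← Real.rpow_add two_pos, ← Real.rpow_add two_pos]
    congr 1
    push_cast
    rw [← hσx]
    field_simp
  calc ((ε/2)^(1/pr) * c * cB) * (2:ℝ)^((j:ℝ)*x) * ((j:ℝ)+1)^θ
      = (ε/2)^(1/pr) * ((2:ℝ)^((((j*d:ℕ)):ℝ)*(1/pr)))
          * (c * ((2:ℝ)^((j:ℝ)*α) * (((j:ℝ)+1))^θ) * cB) * (2:ℝ)^((j:ℝ)*σ) := by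
        rw [hexp]; ring
    _ ≤ (ε/2)^(1/pr) * Mj^(1/pr)
          * (c * ((2:ℝ)^((j:ℝ)*α) * (((j:ℝ)+1))^θ) * cB) * (2:ℝ)^((j:ℝ)*σ) := by
        have h0 : (0:ℝ) ≤ (ε/2)^(1/pr) := Real.rpow_nonneg (by positivity) _
        apply mul_le_mul_of_nonneg_right _ (by positivity)
        apply mul_le_mul_of_nonneg_right _ hX.le
        exact mul_le_mul_of_nonneg_left hM h0
    _ = (2:ℝ)^((j:ℝ)*σ) * ((ε/2)^(1/pr) * Mj^(1/pr)
          * (c * ((2:ℝ)^((j:ℝ)*α) * (((j:ℝ)+1))^θ) * cB)) := by ring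

end Stmt8Aux

/-- necessity of Property A. If `a` follows a Besov sequence prior with
parameters `(α,β,γ,θ)` and template random variable `X` with `P(X ≠ 0) > 0`, and
`‖a‖_{b^s_{p,q}} < ∞` almost surely, then Property A holds. -/
theorem stmt8 (d : ℕ) (hd : 0 < d) (s α β γ θ : ℝ) (p q : ℝ≥0∞)
    (hp : 0 < p) (hq : 0 < q)
    {Ω : Type*} [MeasurableSpace Ω] (μ : Measure Ω) [IsProbabilityMeasure μ]
    (X : Ω → ℝ) (hX : Measurable X)
    (ξ : ℕ × (Fin d → Bool) × (Fin d → ℤ) → Ω → ℝ)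
    (hmeas : ∀ i, Measurable (ξ i))
    (hindep : iIndepFun ξ μ)
    (hident : ∀ i, IdentDistrib (ξ i) X μ μ)
    (hne : 0 < μ {ω | X ω ≠ 0})
    (hfin : ∀ᵐ ω ∂μ,
      besovNorm d s p q (fun j t m => priorCoef d α β γ θ j m * ξ (j, t, m) ω) < ∞) :
    PropertyA d s α β γ θ p q := by
  classical
  obtain ⟨c, hcpos, hEpos0⟩ : ∃ c : ℝ, 0 < c ∧ 0 < μ {ω | c ≤ |X ω|} := by
    by_contra hcon
    push_neg at hcon
    have hsub : {ω | X ω ≠ 0} ⊆ ⋃ n : ℕ, {ω | 1/((n:ℝ)+1) ≤ |X ω|} := by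
      intro ω hω
      have habs : 0 < |X ω| := abs_pos.mpr hω
      obtain ⟨n, hn⟩ := exists_nat_one_div_lt habs
      exact Set.mem_iUnion.mpr ⟨n, hn.le⟩
    have hz : μ (⋃ n : ℕ, {ω | 1/((n:ℝ)+1) ≤ |X ω|}) = 0 := by
      apply measure_iUnion_null
      intro n
      exact le_antisymm (hcon (1/((n:ℝ)+1)) (by positivity)) zero_le
    exact absurd (le_trans (measure_mono hsub) hz.le) (not_le.mpr hne)
  set E := μ {ω' | c ≤ |X ω'|} with hEdef
  have hEi : ∀ i : ℕ × (Fin d → Bool) × (Fin d → ℤ), μ {ω | c ≤ |ξ i ω|} = E := by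
    intro i
    have hs : MeasurableSet {x : ℝ | c ≤ |x|} :=
      measurableSet_le measurable_const measurable_abs
    exact (hident i).measure_mem_eq hs
  have hEpos : 0 < E.toReal := ENNReal.toReal_pos hEpos0.ne' (measure_ne_top μ _)
  set ε := E.toReal with hεdef
  set tF : Fin d → Bool := fun _ => false with htF
  set tT : Fin d → Bool := fun _ => true with htT
  have htTne : tT ≠ tF := by
    intro h
    have := congrFun h ⟨0, hd⟩
    simp [htT, htF] at this
  have hinj : ∀ (j : ℕ) (t : Fin d → Bool),
      Function.Injective (fun m : Fin d → ℤ => (j, t, m)) := by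
    intro j t a b hab
    simpa using hab
  set Sγ : ℕ → Finset (ℕ × (Fin d → Bool) × (Fin d → ℤ)) :=
    fun k => (shellF d k).image (fun m => (0, tF, m)) with hSγ
  set Sβ : ℕ → Finset (ℕ × (Fin d → Bool) × (Fin d → ℤ)) :=
    fun k => (shellF d k).image (fun m => (1, tT, m)) with hSβ
  set Sm : ℕ → Finset (ℕ × (Fin d → Bool) × (Fin d → ℤ)) :=
    fun j => (boxF d (2^j)).image (fun m => (j, tT, m)) with hSm
  have hSγcard : ∀ k, 2^k ≤ (Sγ k).card := by
    intro k
    rw [hSγ, Finset.card_image_of_injective _ (hinj 0 tF)]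
    exact card_shellF_ge hd
  have hSβcard : ∀ k, 2^k ≤ (Sβ k).card := by
    intro k
    rw [hSβ, Finset.card_image_of_injective _ (hinj 1 tT)]
    exact card_shellF_ge hd
  have hboxcard : ∀ j : ℕ, 2^(j*d) ≤ (boxF d (2^j)).card := by
    intro j
    rw [card_boxF, pow_mul]
    exact Nat.pow_le_pow_left (by omega) d
  have hSmcard : ∀ j, 2^j ≤ (Sm j).card := by
    intro j
    rw [hSm, Finset.card_image_of_injective _ (hinj j tT)]
    refine le_trans ?_ (hboxcard j)
    exact Nat.pow_le_pow_right (by norm_num) (by nlinarith)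
  have hcnt1 := counting_lemma ξ hmeas hindep c E hEi hEpos Sγ hSγcard
  have hcnt2 := counting_lemma ξ hmeas hindep c E hEi hEpos Sβ hSβcard
  have hcnt3 := counting_lemma ξ hmeas hindep c E hEi hEpos Sm hSmcard
  obtain ⟨ω, hω1, hω2, hω3, hbesov⟩ := (hcnt1.and (hcnt2.and (hcnt3.and hfin))).exists
  have hcard_eq : ∀ (j : ℕ) (t : Fin d → Bool) (A : Finset (Fin d → ℤ)),
      ((A.image (fun m => (j, t, m))).filter (fun i => c ≤ |ξ i ω|)).card
        = (A.filter (fun m => c ≤ |ξ (j, t, m) ω|)).card := by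
    intro j t A
    rw [Finset.filter_image, Finset.card_image_of_injective _ (hinj j t)]
  have hcγ : ∀ᶠ k in Filter.atTop, ε/2 * ((shellF d k).card:ℝ) ≤
      (((shellF d k).filter (fun m => c ≤ |ξ (0, tF, m) ω|)).card : ℝ) := by
    filter_upwards [hω1] with k hk
    rw [hSγ] at hk
    simp only [Finset.card_image_of_injective _ (hinj 0 tF), hcard_eq 0 tF] at hk
    exact hk
  have hcβ : ∀ᶠ k in Filter.atTop, ε/2 * ((shellF d k).card:ℝ) ≤
      (((shellF d k).filter (fun m => c ≤ |ξ (1, tT, m) ω|)).card : ℝ) := by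
    filter_upwards [hω2] with k hk
    rw [hSβ] at hk
    simp only [Finset.card_image_of_injective _ (hinj 1 tT), hcard_eq 1 tT] at hk
    exact hk
  have hcm : ∀ᶠ j in Filter.atTop, ε/2 * ((boxF d (2^j)).card:ℝ) ≤
      (((boxF d (2^j)).filter (fun m => c ≤ |ξ (j, tT, m) ω|)).card : ℝ) := by
    filter_upwards [hω3] with j hj
    rw [hSm] at hj
    simp only [Finset.card_image_of_injective _ (hinj j tT), hcard_eq j tT] at hj
    exact hj
  -- index elements of JIdx
  have hmemF : (tF = fun _ => false) ↔ (0:ℕ) = 0 := by simp [htF]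
  have hmemT : ∀ j : ℕ, j ≠ 0 → ((tT = fun _ => false) ↔ j = 0) := by
    intro j hj
    constructor
    · intro h
      exact absurd (by rw [htF]; exact h) htTne
    · intro h
      exact absurd h hj
  set jt0 : JIdx d := ⟨(0, tF), hmemF⟩ with hjt0
  set jt1 : JIdx d := ⟨(1, tT), hmemT 1 one_ne_zero⟩ with hjt1
  set Jemb : ℕ → JIdx d := fun j =>
    if hj : j = 0 then ⟨(0, tF), hmemF⟩ else ⟨(j, tT), hmemT j hj⟩ with hJemb
  have hJval : ∀ (j : ℕ) (hj : j ≠ 0), Jemb j = ⟨(j, tT), hmemT j hj⟩ := by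
    intro j hj
    simp only [hJemb]
    exact dif_neg hj
  have hJfst : ∀ j, (Jemb j).1.1 = j := by
    intro j
    by_cases hj : j = 0
    · subst hj; rfl
    · rw [hJval j hj]
  have hJinj : Function.Injective Jemb := fun a b hab => by
    rw [← hJfst a, ← hJfst b, hab]
  -- besov dissection
  set F : JIdx d → ℝ≥0∞ := fun jt =>
    ENNReal.ofReal ((2:ℝ)^((jt.1.1:ℝ)*(s + (d:ℝ)/2 - (d:ℝ)*(p⁻¹).toReal))) *
      lpNorm p (fun m : Fin d → ℤ =>
        ENNReal.ofReal |priorCoef d α β γ θ jt.1.1 m * ξ (jt.1.1, jt.1.2, m) ω|)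
    with hFdef
  have hBF : lpNorm q F < ⊤ := hbesov
  have hFne : ∀ jt, F jt ≠ ⊤ := fun jt => lpNorm_ne_top_elt hq hBF.ne jt
  have hwne0 : ∀ j : ℕ,
      (ENNReal.ofReal ((2:ℝ)^((j:ℝ)*(s + (d:ℝ)/2 - (d:ℝ)*(p⁻¹).toReal)))) ≠ 0 :=
    fun j => (ENNReal.ofReal_pos.mpr (Real.rpow_pos_of_pos two_pos _)).ne'
  have hInner_ne : ∀ jt : JIdx d,
      lpNorm p (fun m : Fin d → ℤ =>
        ENNReal.ofReal |priorCoef d α β γ θ jt.1.1 m * ξ (jt.1.1, jt.1.2, m) ω|) ≠ ⊤ := by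
    intro jt hcontop
    apply hFne jt
    simp only [hFdef]
    rw [hcontop, ENNReal.mul_top (hwne0 _)]
  set x : ℝ := s + (d:ℝ)/2 + α with hx
  unfold PropertyA
  by_cases hptop : p = ⊤
  · -- case p = ∞
    have hp0 : s + (d:ℝ)/2 - (d:ℝ)*(p⁻¹).toReal = s + (d:ℝ)/2 := by
      rw [hptop]; simp
    have hγ : γ ≤ 0 := by
      have hIS : (⨆ m : Fin d → ℤ,
          ENNReal.ofReal |priorCoef d α β γ θ 0 m * ξ (0, tF, m) ω|) ≠ ⊤ := by
        have h1 := hInner_ne jt0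
        rw [hptop] at h1
        unfold _root_.lpNorm at h1
        rw [if_pos rfl] at h1
        exact h1
      have := gammaBeta_sup (α := α) (β := β) (γ := γ) (θ := θ) hd (j₀ := 0)
        (by norm_num) hcpos hEpos hcγ hIS
      simpa using this
    have hβ : β ≤ 0 := by
      have hIS : (⨆ m : Fin d → ℤ,
          ENNReal.ofReal |priorCoef d α β γ θ 1 m * ξ (1, tT, m) ω|) ≠ ⊤ := by
        have h1 := hInner_ne jt1
        rw [hptop] at h1
        unfold _root_.lpNorm at h1
        rw [if_pos rfl] at h1
        exact h1
      have := gammaBeta_sup (α := α) (β := β) (γ := γ) (θ := θ) hd (j₀ := 1)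
        (le_refl 1) hcpos hEpos hcβ hIS
      simpa using this
    set C : ℝ := c * (2:ℝ)^(min β 0) with hC
    have hCpos : 0 < C := _root_.mul_pos hcpos (Real.rpow_pos_of_pos two_pos _)
    have hlow : ∀ᶠ j : ℕ in Filter.atTop,
        ENNReal.ofReal (C * (2:ℝ)^((j:ℝ)*x) * ((j:ℝ)+1)^θ) ≤ F (Jemb j) := by
      filter_upwards [hcm, Filter.eventually_ge_atTop 1] with j hj hj1
      have hjne : j ≠ 0 := by omega
      have hcardpos :
          0 < ((boxF d (2^j)).filter (fun m => c ≤ |ξ (j, tT, m) ω|)).card := by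
        by_contra hzero
        push_neg at hzero
        have h0 : ((boxF d (2^j)).filter (fun m => c ≤ |ξ (j, tT, m) ω|)).card = 0 := by
          omega
        have hcardS : (0:ℝ) < ((boxF d (2^j)).card : ℝ) := by
          have h2 : 0 < (boxF d (2^j)).card :=
            lt_of_lt_of_le (pow_pos (by norm_num) _) (hboxcard j)
          exact_mod_cast h2
        rw [h0] at hj
        simp only [Nat.cast_zero] at hj
        nlinarith
      obtain ⟨m, hm⟩ := Finset.card_pos.mp hcardpos
      rw [Finset.mem_filter] at hm
      have hcoef := priorCoef_ge_box (d := d) α β γ θ hjne hm.1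
      have hval : C * ((2:ℝ)^((j:ℝ)*α) * ((j:ℝ)+1)^θ)
          ≤ |priorCoef d α β γ θ j m * ξ (j, tT, m) ω| := by
        rw [abs_mul, abs_of_pos (priorCoef_pos α β γ θ j m)]
        calc C * ((2:ℝ)^((j:ℝ)*α) * ((j:ℝ)+1)^θ)
            = ((2:ℝ)^((j:ℝ)*α) * ((j:ℝ)+1)^θ * (2:ℝ)^(min β 0)) * c := by
              rw [hC]; ring
          _ ≤ priorCoef d α β γ θ j m * |ξ (j, tT, m) ω| :=
              mul_le_mul hcoef hm.2 hcpos.le (priorCoef_pos α β γ θ j m).le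
      have hsup : ENNReal.ofReal (C * ((2:ℝ)^((j:ℝ)*α) * ((j:ℝ)+1)^θ))
          ≤ lpNorm p (fun m' : Fin d → ℤ =>
              ENNReal.ofReal |priorCoef d α β γ θ j m' * ξ (j, tT, m') ω|) := by
        rw [hptop]
        unfold _root_.lpNorm
        rw [if_pos rfl]
        exact le_trans (ENNReal.ofReal_le_ofReal hval)
          (le_iSup (fun m' : Fin d → ℤ =>
            ENNReal.ofReal |priorCoef d α β γ θ j m' * ξ (j, tT, m') ω|) m)
      have hFj : F (Jemb j) = ENNReal.ofReal ((2:ℝ)^((j:ℝ)*(s + (d:ℝ)/2))) *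
          lpNorm p (fun m' : Fin d → ℤ =>
            ENNReal.ofReal |priorCoef d α β γ θ j m' * ξ (j, tT, m') ω|) := by
        rw [hJval j hjne]
        simp only [hFdef]
        rw [hp0]
      rw [hFj]
      calc ENNReal.ofReal (C * (2:ℝ)^((j:ℝ)*x) * ((j:ℝ)+1)^θ)
          = ENNReal.ofReal ((2:ℝ)^((j:ℝ)*(s + (d:ℝ)/2)) *
              (C * ((2:ℝ)^((j:ℝ)*α) * ((j:ℝ)+1)^θ))) := by
            congr 1
            have h2 : (2:ℝ)^((j:ℝ)*(s+(d:ℝ)/2)) * (2:ℝ)^((j:ℝ)*α)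
                = (2:ℝ)^((j:ℝ)*x) := by
              rw [← Real.rpow_add two_pos]
              congr 1
              rw [hx]; ring
            rw [← h2]; ring
        _ = ENNReal.ofReal ((2:ℝ)^((j:ℝ)*(s + (d:ℝ)/2))) *
              ENNReal.ofReal (C * ((2:ℝ)^((j:ℝ)*α) * ((j:ℝ)+1)^θ)) :=
            ENNReal.ofReal_mul (by positivity)
        _ ≤ ENNReal.ofReal ((2:ℝ)^((j:ℝ)*(s + (d:ℝ)/2))) *
              lpNorm p (fun m' : Fin d → ℤ =>
                ENNReal.ofReal |priorCoef d α β γ θ j m' * ξ (j, tT, m') ω|) :=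
            mul_le_mul_right hsup _
    refine ⟨by rw [if_pos hptop]; exact hγ, by rw [if_pos hptop]; exact hβ, ?_⟩
    by_cases hqtop : q = ⊤
    · have hBtop : lpNorm ⊤ F ≠ ⊤ := by rw [hqtop] at hBF; exact hBF.ne
      rcases main_sup hBtop hCpos (fun j => le_lpNorm_top F (Jemb j)) hlow with
        h | ⟨h1, h2⟩
      · exact Or.inl (by rw [hx] at h; exact h)
      · refine Or.inr ⟨by rw [hx] at h1; exact h1, ?_⟩
        rw [if_pos hqtop]
        exact h2
    · have hqr : 0 < q.toReal := ENNReal.toReal_pos hq.ne' hqtop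
      have hTq := lpNorm_tsum_ne_top hq hqtop hBF.ne
      have hTG : (∑' j : ℕ, F (Jemb j) ^ q.toReal) ≠ ⊤ :=
        ne_top_of_le_ne_top hTq
          (ENNReal.tsum_comp_le_tsum_of_injective hJinj (fun jt => F jt ^ q.toReal))
      rcases main_sum hqr hCpos hTG hlow with h | ⟨h1, h2⟩
      · exact Or.inl (by rw [hx] at h; exact h)
      · refine Or.inr ⟨by rw [hx] at h1; exact h1, ?_⟩
        rw [if_neg hqtop]
        exact h2
  · -- case p < ∞
    have hpr : 0 < p.toReal := ENNReal.toReal_pos hp.ne' hptop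
    have hptr : (d:ℝ)*(p⁻¹).toReal = (d:ℝ)/p.toReal := by
      rw [ENNReal.toReal_inv, div_eq_mul_inv]
    have hTsum : ∀ jt : JIdx d, (∑' m : Fin d → ℤ,
        (ENNReal.ofReal |priorCoef d α β γ θ jt.1.1 m * ξ (jt.1.1, jt.1.2, m) ω|)
          ^ p.toReal) ≠ ⊤ :=
      fun jt => lpNorm_tsum_ne_top hp hptop (hInner_ne jt)
    have hγ : γ < -((d:ℝ)/p.toReal) := by
      have hIS : (∑' m : Fin d → ℤ,
          (ENNReal.ofReal |priorCoef d α β γ θ 0 m * ξ (0, tF, m) ω|) ^ p.toReal)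
            ≠ ⊤ := hTsum jt0
      have := gammaBeta_fin (α := α) (β := β) (γ := γ) (θ := θ) hd (j₀ := 0)
        (by norm_num) hpr hcpos hEpos hcγ hIS
      simpa using this
    have hβ : β < -((d:ℝ)/p.toReal) := by
      have hIS : (∑' m : Fin d → ℤ,
          (ENNReal.ofReal |priorCoef d α β γ θ 1 m * ξ (1, tT, m) ω|) ^ p.toReal)
            ≠ ⊤ := hTsum jt1
      have := gammaBeta_fin (α := α) (β := β) (γ := γ) (θ := θ) hd (j₀ := 1)
        (le_refl 1) hpr hcpos hEpos hcβ hIS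
      simpa using this
    set C : ℝ := (ε/2)^(1/p.toReal) * c * (2:ℝ)^(min β 0) with hC
    have hCpos : 0 < C := by
      have h1 : (0:ℝ) < (ε/2)^(1/p.toReal) := Real.rpow_pos_of_pos (by positivity) _
      have h2 : (0:ℝ) < (2:ℝ)^(min β 0) := Real.rpow_pos_of_pos two_pos _
      positivity
    set σ : ℝ := s + (d:ℝ)/2 - (d:ℝ)*(p⁻¹).toReal with hσ
    have hσx : σ + (d:ℝ)/p.toReal + α = x := by
      rw [hσ, hptr, hx]; ring
    have hlow : ∀ᶠ j : ℕ in Filter.atTop,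
        ENNReal.ofReal (C * (2:ℝ)^((j:ℝ)*x) * ((j:ℝ)+1)^θ) ≤ F (Jemb j) := by
      filter_upwards [hcm, Filter.eventually_ge_atTop 1] with j hj hj1
      have hjne : j ≠ 0 := by omega
      set A : ℝ := (2:ℝ)^((j:ℝ)*α) * (((j:ℝ)+1))^θ with hA
      have hApos : 0 < A := _root_.mul_pos (Real.rpow_pos_of_pos two_pos _)
        (Real.rpow_pos_of_pos (by positivity) _)
      set cB : ℝ := (2:ℝ)^(min β 0) with hcB
      have hcBpos : 0 < cB := Real.rpow_pos_of_pos two_pos _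
      have hXpos : (0:ℝ) < c * A * cB := by positivity
      set G : Finset (Fin d → ℤ) := (boxF d (2^j)).filter (fun m => c ≤ |ξ (j, tT, m) ω|)
        with hG
      set v : ℝ≥0∞ := ENNReal.ofReal ((c * A * cB)^p.toReal) with hv
      have hvle : ∀ m ∈ G,
          v ≤ (ENNReal.ofReal |priorCoef d α β γ θ j m * ξ (j, tT, m) ω|) ^ p.toReal := by
        intro m hm
        rw [hG, Finset.mem_filter] at hm
        have hcoef := priorCoef_ge_box (d := d) α β γ θ hjne hm.1
        rw [← hA, ← hcB] at hcoef
        have hval : c * A * cB ≤ |priorCoef d α β γ θ j m * ξ (j, tT, m) ω| := by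
          rw [abs_mul, abs_of_pos (priorCoef_pos α β γ θ j m)]
          calc c * A * cB = (A * cB) * c := by ring
            _ ≤ priorCoef d α β γ θ j m * |ξ (j, tT, m) ω| :=
                mul_le_mul hcoef hm.2 hcpos.le (priorCoef_pos α β γ θ j m).le
        rw [hv, ← ENNReal.ofReal_rpow_of_pos hXpos]
        exact ENNReal.rpow_le_rpow (ENNReal.ofReal_le_ofReal hval) hpr.le
      have hsum := Finset.card_nsmul_le_sum G _ v hvle
      have hcard : ENNReal.ofReal (ε/2 * ((boxF d (2^j)).card : ℝ)) ≤ (G.card : ℝ≥0∞) := by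
        rw [← ENNReal.ofReal_natCast]
        exact ENNReal.ofReal_le_ofReal hj
      have htsum_lb : ENNReal.ofReal ((ε/2 * ((boxF d (2^j)).card : ℝ)) * ((c * A * cB)^p.toReal))
          ≤ ∑' m : Fin d → ℤ,
            (ENNReal.ofReal |priorCoef d α β γ θ j m * ξ (j, tT, m) ω|) ^ p.toReal := by
        refine le_trans ?_ (le_trans hsum (ENNReal.sum_le_tsum G))
        rw [nsmul_eq_mul]
        rw [ENNReal.ofReal_mul (by positivity)]
        exact mul_le_mul_left hcard v
      have hinner_lb : ENNReal.ofReal (((ε/2 * ((boxF d (2^j)).card : ℝ)) *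
            ((c * A * cB)^p.toReal))^(1/p.toReal))
          ≤ lpNorm p (fun m : Fin d → ℤ =>
              ENNReal.ofReal |priorCoef d α β γ θ j m * ξ (j, tT, m) ω|) := by
        unfold _root_.lpNorm
        rw [if_neg hptop]
        have hMc : (0:ℝ) < ((boxF d (2^j)).card : ℝ) := by
          have h2 : 0 < (boxF d (2^j)).card :=
            lt_of_lt_of_le (pow_pos (by norm_num) _) (hboxcard j)
          exact_mod_cast h2
        have hbase : (0:ℝ) < (ε/2 * ((boxF d (2^j)).card : ℝ)) * ((c * A * cB)^p.toReal) := by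
          have := Real.rpow_pos_of_pos hXpos p.toReal
          positivity
        rw [← ENNReal.ofReal_rpow_of_pos hbase]
        exact ENNReal.rpow_le_rpow htsum_lb (by positivity)
      have hMj : (2:ℝ)^(j*d) ≤ ((boxF d (2^j)).card : ℝ) := by exact_mod_cast hboxcard j
      have hreal := box_lower_real (d := d) (by positivity : (0:ℝ) < ε) hcpos hcBpos hpr
        α θ σ x hσx j hMj
      rw [← hA] at hreal
      have hFj : F (Jemb j) = ENNReal.ofReal ((2:ℝ)^((j:ℝ)*σ)) *
          lpNorm p (fun m : Fin d → ℤ =>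
            ENNReal.ofReal |priorCoef d α β γ θ j m * ξ (j, tT, m) ω|) := by
        rw [hJval j hjne]
      rw [hFj]
      calc ENNReal.ofReal (C * (2:ℝ)^((j:ℝ)*x) * ((j:ℝ)+1)^θ)
          ≤ ENNReal.ofReal ((2:ℝ)^((j:ℝ)*σ) *
              (((ε/2) * ((boxF d (2^j)).card : ℝ) * ((c * A * cB)^p.toReal))^(1/p.toReal))) := by
            apply ENNReal.ofReal_le_ofReal
            rw [hC]
            exact hreal
        _ = ENNReal.ofReal ((2:ℝ)^((j:ℝ)*σ)) *
              ENNReal.ofReal ((((ε/2) * ((boxF d (2^j)).card : ℝ) *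
                ((c * A * cB)^p.toReal))^(1/p.toReal))) :=
            ENNReal.ofReal_mul (by positivity)
        _ ≤ ENNReal.ofReal ((2:ℝ)^((j:ℝ)*σ)) *
              lpNorm p (fun m : Fin d → ℤ =>
                ENNReal.ofReal |priorCoef d α β γ θ j m * ξ (j, tT, m) ω|) :=
            mul_le_mul_right hinner_lb _
    refine ⟨by rw [if_neg hptop]; exact hγ, by rw [if_neg hptop]; exact hβ, ?_⟩
    by_cases hqtop : q = ⊤
    · have hBtop : lpNorm ⊤ F ≠ ⊤ := by rw [hqtop] at hBF; exact hBF.ne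
      rcases main_sup hBtop hCpos (fun j => le_lpNorm_top F (Jemb j)) hlow with
        h | ⟨h1, h2⟩
      · exact Or.inl (by rw [hx] at h; exact h)
      · refine Or.inr ⟨by rw [hx] at h1; exact h1, ?_⟩
        rw [if_pos hqtop]
        exact h2
    · have hqr : 0 < q.toReal := ENNReal.toReal_pos hq.ne' hqtop
      have hTq := lpNorm_tsum_ne_top hq hqtop hBF.ne
      have hTG : (∑' j : ℕ, F (Jemb j) ^ q.toReal) ≠ ⊤ :=
        ne_top_of_le_ne_top hTq
          (ENNReal.tsum_comp_le_tsum_of_injective hJinj (fun jt => F jt ^ q.toReal))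
      rcases main_sum hqr hCpos hTG hlow with h | ⟨h1, h2⟩
      · exact Or.inl (by rw [hx] at h; exact h)
      · refine Or.inr ⟨by rw [hx] at h1; exact h1, ?_⟩
        rw [if_neg hqtop]
        exact h2

end
end

section
/- Let d ∈ ℕ, s, α, β, γ, θ ∈ ℝ, and q ∈ (0,∞]. Assume a = (a_{j,t,m})_{(j,t,m)∈J} follows a Besov sequence prior with parameters (α,β,γ,θ) and template random variable X, and that ‖a‖_{b^s_{∞,q}} < ∞ almost surely. If β = 0 or γ = 0, then there exists R > 0 such that |X| ≤ R almost surely. -/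
open MeasureTheory ProbabilityTheory ENNReal

noncomputable section

section AuxStmt12

variable {Ω : Type*} [MeasurableSpace Ω] {μ : Measure Ω}

lemma aux_iIndepSet {I : Type*} [DecidableEq I] {ξ : I → Ω → ℝ}
    (hindep : iIndepFun ξ μ)
    {e : ℕ → I} (he : Function.Injective e)
    {S : Set ℝ} (hS : MeasurableSet S) (hmeas : ∀ i, Measurable (ξ i)) :
    iIndepSet (fun n => ξ (e n) ⁻¹' S) μ := by
  rw [iIndepSet_iff_meas_biInter (fun n => hS.preimage (hmeas _))]
  intro s
  have h := hindep.measure_inter_preimage_eq_mul (s.image e) (sets := fun _ => S)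
    (fun i _ => hS)
  rwa [Finset.set_biInter_finset_image, Finset.prod_image (fun a _ b _ h => he h)] at h

lemma aux_bc [IsProbabilityMeasure μ] {I : Type*} [DecidableEq I] {ξ : I → Ω → ℝ}
    (hmeas : ∀ i, Measurable (ξ i))
    (hindep : iIndepFun ξ μ)
    {e : ℕ → I} (he : Function.Injective e)
    {S : Set ℝ} (hS : MeasurableSet S)
    (hconst : ∀ n, μ (ξ (e n) ⁻¹' S) = μ (ξ (e 0) ⁻¹' S))
    (hne : μ (ξ (e 0) ⁻¹' S) ≠ 0) :
    ∀ᵐ ω ∂μ, ∃ n, ξ (e n) ω ∈ S := by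
  set A : ℕ → Set Ω := fun n => ξ (e n) ⁻¹' S with hA
  have hAm : ∀ n, MeasurableSet (A n) := fun n => hS.preimage (hmeas _)
  have hlim : μ (Filter.limsup A Filter.atTop) = 1 := by
    refine measure_limsup_eq_one hAm (aux_iIndepSet hindep he hS hmeas) ?_
    calc (∑' n, μ (A n)) = ∑' _ : ℕ, μ (A 0) := tsum_congr fun n => hconst n
      _ = ∞ := ENNReal.tsum_const_eq_top_of_ne_zero hne
  have hsub : Filter.limsup A Filter.atTop ⊆ {ω | ∃ n, ξ (e n) ω ∈ S} := by
    intro ω hω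
    rw [Filter.mem_limsup_iff_frequently_mem] at hω
    exact hω.exists
  have hz : μ {ω | ∃ n, ξ (e n) ω ∈ S}ᶜ = 0 := by
    refine measure_mono_null (Set.compl_subset_compl.2 hsub) ?_
    rw [measure_compl (MeasurableSet.measurableSet_limsup hAm) (measure_ne_top _ _), hlim]
    simp
  exact hz

lemma lpNorm_apply_lt_top {q : ℝ≥0∞} (hq : 0 < q) {ι : Type*} {x : ι → ℝ≥0∞}
    (h : lpNorm q x < ∞) (i : ι) : x i < ∞ := by
  unfold _root_.lpNorm at h
  split_ifs at h with hiq
  · exact lt_of_le_of_lt (le_iSup x i) h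
  · have hr : 0 < q.toReal := ENNReal.toReal_pos hq.ne' hiq
    have h1 : (∑' i, x i ^ q.toReal) < ∞ :=
      (ENNReal.rpow_lt_top_iff_of_pos (by positivity)).mp h
    exact (ENNReal.rpow_lt_top_iff_of_pos hr).mp (lt_of_le_of_lt (ENNReal.le_tsum i) h1)

end AuxStmt12

/-- essential boundedness. If `a` follows a Besov sequence prior with
parameters `(α,β,γ,θ)` and template random variable `X`, `‖a‖_{b^s_{∞,q}} < ∞` almost
surely, and `β = 0` or `γ = 0`, then `X` is essentially bounded. -/
theorem stmt12 (d : ℕ) (hd : 0 < d) (s α β γ θ : ℝ) (q : ℝ≥0∞) (hq : 0 < q)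
    {Ω : Type*} [MeasurableSpace Ω] (μ : Measure Ω) [IsProbabilityMeasure μ]
    (X : Ω → ℝ) (hX : Measurable X)
    (ξ : ℕ × (Fin d → Bool) × (Fin d → ℤ) → Ω → ℝ)
    (hmeas : ∀ i, Measurable (ξ i))
    (hindep : iIndepFun ξ μ)
    (hident : ∀ i, IdentDistrib (ξ i) X μ μ)
    (hfin : ∀ᵐ ω ∂μ,
      besovNorm d s ∞ q (fun j t m => priorCoef d α β γ θ j m * ξ (j, t, m) ω) < ∞)
    (hβγ : β = 0 ∨ γ = 0) :
    ∃ R > (0 : ℝ), ∀ᵐ ω ∂μ, |X ω| ≤ R := by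
  classical
  by_contra hcon
  have hcon' : ∀ R : ℝ, 0 < R → ¬ ∀ᵐ ω ∂μ, |X ω| ≤ R :=
    fun R hR hP => hcon ⟨R, hR, hP⟩
  obtain ⟨j₀, t₀, hjt, c, hcpos, hcoef⟩ :
      ∃ (j₀ : ℕ) (t₀ : Fin d → Bool), ((t₀ = fun _ => false) ↔ j₀ = 0) ∧
        ∃ c : ℝ, 0 < c ∧ ∀ m, priorCoef d α β γ θ j₀ m = c := by
    rcases hβγ with hβ | hγ
    · refine ⟨1, fun _ => true, ?_, (2:ℝ) ^ α * 2 ^ θ, by positivity, ?_⟩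
      · constructor
        · intro h; exact absurd (congrFun h ⟨0, hd⟩) (by simp)
        · intro h; omega
      · intro m
        have hbase : (0:ℝ) < 1 + znorm m / 2 ^ (1:ℕ) := by
          have : (0:ℝ) ≤ znorm m := by
            simp [znorm]
          positivity
        simp only [priorCoef, hβ, if_neg one_ne_zero, Real.rpow_zero, mul_one,
          Nat.cast_one, one_mul]
        norm_num
    · refine ⟨0, fun _ => false, by simp, 1, one_pos, ?_⟩
      intro m
      simp only [priorCoef, hγ, if_pos rfl, Real.rpow_zero, Nat.cast_zero, zero_mul,
        zero_add, Real.one_rpow, mul_one, one_mul]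
      norm_num
  have hbdd : ∀ᵐ ω ∂μ, ∃ B : ℝ, ∀ m : Fin d → ℤ, |ξ (j₀, t₀, m) ω| ≤ B := by
    filter_upwards [hfin] with ω hω
    unfold besovNorm at hω
    have h1 := lpNorm_apply_lt_top hq hω ⟨(j₀, t₀), hjt⟩
    have h2 : lpNorm ∞ (fun m : Fin d → ℤ =>
        ENNReal.ofReal |priorCoef d α β γ θ j₀ m * ξ (j₀, t₀, m) ω|) < ∞ := by
      refine ENNReal.lt_top_of_mul_ne_top_right h1.ne ?_
      simp only [ne_eq, ENNReal.ofReal_eq_zero, not_le]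
      positivity
    rw [_root_.lpNorm, if_pos rfl] at h2
    refine ⟨(⨆ m : Fin d → ℤ, ENNReal.ofReal
        |priorCoef d α β γ θ j₀ m * ξ (j₀, t₀, m) ω|).toReal / c, fun m => ?_⟩
    have h3 : ENNReal.ofReal |priorCoef d α β γ θ j₀ m * ξ (j₀, t₀, m) ω| ≤
        ⨆ m : Fin d → ℤ, ENNReal.ofReal |priorCoef d α β γ θ j₀ m * ξ (j₀, t₀, m) ω| :=
      le_iSup (fun m : Fin d → ℤ =>
        ENNReal.ofReal |priorCoef d α β γ θ j₀ m * ξ (j₀, t₀, m) ω|) m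
    have h4 := (ENNReal.ofReal_le_iff_le_toReal h2.ne).mp h3
    rw [abs_mul, hcoef m, abs_of_pos hcpos] at h4
    rw [le_div_iff₀ hcpos]
    linarith
  have hK : ∀ k : ℕ, ∀ᵐ ω ∂μ,
      ∃ n : ℕ, (k : ℝ) + 1 < |ξ (j₀, t₀, fun _ => (n : ℤ)) ω| := by
    intro k
    have hS : MeasurableSet {x : ℝ | (k : ℝ) + 1 < |x|} :=
      measurableSet_lt measurable_const measurable_id.abs
    set e : ℕ → ℕ × (Fin d → Bool) × (Fin d → ℤ) :=
      fun n => (j₀, t₀, fun _ => (n : ℤ)) with he_def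
    have he : Function.Injective e := by
      intro a b hab
      have h : (a : ℤ) = (b : ℤ) := congrFun (congrArg (fun x => x.2.2) hab) ⟨0, hd⟩
      exact_mod_cast h
    have hconst : ∀ n, μ (ξ (e n) ⁻¹' {x : ℝ | (k : ℝ) + 1 < |x|}) =
        μ (ξ (e 0) ⁻¹' {x : ℝ | (k : ℝ) + 1 < |x|}) := by
      intro n
      rw [(hident (e n)).measure_mem_eq hS, ← (hident (e 0)).measure_mem_eq hS]
    have hne : μ (ξ (e 0) ⁻¹' {x : ℝ | (k : ℝ) + 1 < |x|}) ≠ 0 := by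
      rw [(hident (e 0)).measure_mem_eq hS]
      intro h0
      refine hcon' ((k : ℝ) + 1) (by positivity) ?_
      rw [ae_iff]
      convert h0 using 2
      ext ω
      simp [not_le]
    exact aux_bc hmeas hindep he hS hconst hne
  have hKall : ∀ᵐ ω ∂μ, ∀ k : ℕ,
      ∃ n : ℕ, (k : ℝ) + 1 < |ξ (j₀, t₀, fun _ => (n : ℤ)) ω| := ae_all_iff.2 hK
  have hFalse : ∀ᵐ _ ∂μ, False := by
    filter_upwards [hbdd, hKall] with ω hBex hKω
    obtain ⟨B, hB⟩ := hBex
    obtain ⟨k, hk⟩ := exists_nat_ge B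
    obtain ⟨n, hn⟩ := hKω k
    have := hB (fun _ => (n : ℤ))
    linarith
  exact (IsProbabilityMeasure.ne_zero μ) (by simpa using hFalse)

end
end

section
/- Let d ∈ ℕ, s, α, β, γ, θ ∈ ℝ, and q ∈ (0,∞). Let X be a standard normal random variable (law N(0,1) on ℝ), and assume a = (a_{j,t,m})_{(j,t,m)∈J} follows a Besov sequence prior with parameters (α,β,γ,θ) and template random variable X. If s + d/2 + α = 0 and θ ≥ −1/2 − 1/q, then almost surely ‖a‖_{b^s_{∞,q}} = ∞. -/
open MeasureTheory ProbabilityTheory ENNReal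

noncomputable section

lemma aux_exp_neg_le (u : ℝ) (hu : 0 < u) : Real.exp (-u) ≤ 4 / u ^ 2 := by
  have h1 : u / 2 + 1 ≤ Real.exp (u / 2) := Real.add_one_le_exp _
  have he : Real.exp u = Real.exp (u / 2) * Real.exp (u / 2) := by
    rw [← Real.exp_add]; ring_nf
  have h2 : u ^ 2 / 4 ≤ Real.exp u := by nlinarith [hu.le]
  rw [Real.exp_neg]
  rw [inv_le_iff_one_le_mul₀ (Real.exp_pos u)]
  rw [div_mul_eq_mul_div, le_div_iff₀ (by positivity)]
  nlinarith [Real.exp_pos u]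


lemma aux_gauss_tail (x : ℝ) (hx : 0 ≤ x) :
    gaussianReal 0 1 {y : ℝ | |y| ≤ x}
      ≤ ENNReal.ofReal (1 - (Real.sqrt (2 * Real.pi))⁻¹ * Real.exp (-(x + 1) ^ 2 / 2)) := by
  set δ := (Real.sqrt (2 * Real.pi))⁻¹ * Real.exp (-(x + 1) ^ 2 / 2) with hδ
  have hδpos : 0 < δ := by positivity
  have h1 : ENNReal.ofReal δ ≤ gaussianReal 0 1 (Set.Ioc x (x + 1)) := by
    rw [gaussianReal_apply 0 one_ne_zero]
    have hb : ∀ y ∈ Set.Ioc x (x + 1), ENNReal.ofReal δ ≤ gaussianPDF 0 1 y := by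
      intro y hy
      rw [gaussianPDF]
      apply ENNReal.ofReal_le_ofReal
      rw [gaussianPDFReal]
      simp only [NNReal.coe_one, mul_one, sub_zero]
      have hy1 : y ^ 2 ≤ (x + 1) ^ 2 := by nlinarith [hy.1, hy.2]
      rw [hδ]
      apply mul_le_mul_of_nonneg_left _ (by positivity)
      exact Real.exp_le_exp.2 (by linarith)
    calc ENNReal.ofReal δ = ENNReal.ofReal δ * volume (Set.Ioc x (x + 1)) := by
          rw [Real.volume_Ioc]; norm_num
      _ = ∫⁻ _ in Set.Ioc x (x + 1), ENNReal.ofReal δ := by rw [setLIntegral_const]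
      _ ≤ ∫⁻ y in Set.Ioc x (x + 1), gaussianPDF 0 1 y :=
          setLIntegral_mono (measurable_gaussianPDF 0 1) hb
  have hsub : {y : ℝ | |y| ≤ x} ⊆ (Set.Ioc x (x + 1))ᶜ := by
    intro y hy hy2
    have h := abs_le.1 (by simpa using hy)
    exact absurd hy2.1 (not_lt.2 h.2)
  calc gaussianReal 0 1 {y : ℝ | |y| ≤ x} ≤ gaussianReal 0 1 (Set.Ioc x (x + 1))ᶜ :=
        measure_mono hsub
    _ = 1 - gaussianReal 0 1 (Set.Ioc x (x + 1)) := by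
        rw [measure_compl measurableSet_Ioc (measure_ne_top _ _), measure_univ]
    _ ≤ 1 - ENNReal.ofReal δ := tsub_le_tsub_left h1 1
    _ = ENNReal.ofReal (1 - δ) := by
        rw [ENNReal.ofReal_sub 1 hδpos.le, ENNReal.ofReal_one]

def auxT (d : ℕ) : Fin d → Bool := fun _ => true

def auxM (d : ℕ) (k : ℕ) : Fin d → ℤ := fun i => if (i : ℕ) = 0 then (k : ℤ) else 0

lemma auxM_inj {d : ℕ} (hd : 0 < d) : Function.Injective (auxM d) := by
  intro k k' h
  have := congrFun h ⟨0, hd⟩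
  simpa [auxM] using this

lemma znorm_auxM {d : ℕ} (hd : 0 < d) (k : ℕ) : znorm (auxM d k) = k := by
  unfold znorm
  congr 1
  apply le_antisymm
  · apply Finset.sup_le
    intro i _
    by_cases h : (i : ℕ) = 0 <;> simp [auxM, h]
  · have := Finset.le_sup (f := fun i => ((auxM d k i).natAbs)) (Finset.mem_univ (⟨0, hd⟩ : Fin d))
    simpa [auxM] using this


lemma aux_delta_le_one (x : ℝ) :
    (Real.sqrt (2 * Real.pi))⁻¹ * Real.exp (-(x + 1) ^ 2 / 2) ≤ 1 := by
  have hpi : (1:ℝ) ≤ Real.sqrt (2 * Real.pi) := by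
    rw [Real.one_le_sqrt]; nlinarith [Real.pi_gt_three]
  calc (Real.sqrt (2 * Real.pi))⁻¹ * Real.exp (-(x + 1) ^ 2 / 2) ≤ 1 * 1 := by
        apply mul_le_mul (inv_le_one_of_one_le₀ hpi) _ (Real.exp_pos _).le zero_le_one
        exact Real.exp_le_one_iff.2 (by nlinarith [sq_nonneg (x + 1)])
    _ = 1 := by norm_num


lemma aux_w {z b : ℝ} (h1 : 1 ≤ z) (h2 : z ≤ 2) : min ((2:ℝ) ^ b) 1 ≤ z ^ b := by
  rcases le_or_gt 0 b with hb | hb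
  · exact le_trans (min_le_right _ _) (Real.one_le_rpow h1 hb)
  · exact le_trans (min_le_left _ _)
      (Real.rpow_le_rpow_of_nonpos (lt_of_lt_of_le one_pos h1) h2 hb.le)


lemma aux_harmonic (C : ℕ) : ∑' n : ℕ, ENNReal.ofReal (((n : ℝ) + C + 2)⁻¹) = ⊤ := by
  by_contra h
  have hs := ENNReal.summable_toReal h
  have hs2 : Summable (fun n : ℕ => ((n : ℝ) + C + 2)⁻¹) := by
    refine hs.congr fun n => ?_
    rw [ENNReal.toReal_ofReal (by positivity)]
  have hs3 : Summable (fun n : ℕ => ((n + (C + 2) : ℕ) : ℝ)⁻¹) := by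
    refine hs2.congr fun n => ?_
    push_cast; ring_nf
  exact Real.not_summable_natCast_inv
    ((summable_nat_add_iff (f := fun m : ℕ => ((m : ℕ) : ℝ)⁻¹) (C + 2)).mp hs3)


lemma aux_real_bound (n : ℕ) :
    (1 - (Real.sqrt (2 * Real.pi))⁻¹ *
        Real.exp (-(Real.sqrt (n + 2) / 2 + 1) ^ 2 / 2)) ^ (2 ^ (n + 1))
      ≤ 2 * Real.pi * Real.exp 3 * (Real.exp (3 / 4) / 4) ^ n := by
  have hpi : (1:ℝ) ≤ Real.sqrt (2 * Real.pi) := by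
    rw [Real.one_le_sqrt]; nlinarith [Real.pi_gt_three]
  set δ := (Real.sqrt (2 * Real.pi))⁻¹ *
      Real.exp (-(Real.sqrt (n + 2) / 2 + 1) ^ 2 / 2) with hδdef
  have hδpos : 0 < δ := by positivity
  have hδ1 : δ ≤ 1 := by
    rw [hδdef]
    calc (Real.sqrt (2 * Real.pi))⁻¹ * Real.exp (-(Real.sqrt (n + 2) / 2 + 1) ^ 2 / 2)
        ≤ 1 * 1 := by
          apply mul_le_mul (inv_le_one_of_one_le₀ hpi) _ (Real.exp_pos _).le zero_le_one
          exact Real.exp_le_one_iff.2 (by nlinarith [sq_nonneg (Real.sqrt ((n:ℝ) + 2) / 2 + 1)])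
      _ = 1 := by norm_num
  -- sqrt bound
  have hs0 : (0:ℝ) ≤ Real.sqrt (n + 2) := Real.sqrt_nonneg _
  have hs2 : Real.sqrt (n + 2) ^ 2 = (n : ℝ) + 2 := Real.sq_sqrt (by positivity)
  have hsle : Real.sqrt (n + 2) ≤ ((n : ℝ) + 3) / 2 := by nlinarith
  have hexp : (Real.sqrt (n + 2) / 2 + 1) ^ 2 / 2 ≤ (3 * n + 12) / 8 := by nlinarith
  set B := (2:ℝ) ^ (n + 1) * ((Real.sqrt (2 * Real.pi))⁻¹ *
      Real.exp (-((3 * n + 12) / 8))) with hBdef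
  have hBpos : 0 < B := by positivity
  have hBle : B ≤ (2 ^ (n + 1) : ℕ) * δ := by
    push_cast
    rw [hδdef, hBdef]
    have : Real.exp (-((3 * (n:ℝ) + 12) / 8)) ≤
        Real.exp (-(Real.sqrt (n + 2) / 2 + 1) ^ 2 / 2) := by
      apply Real.exp_le_exp.2; linarith
    nlinarith [Real.exp_pos (-((3 * (n:ℝ) + 12) / 8)),
      inv_pos.2 (lt_of_lt_of_le one_pos hpi)]
  have step1 : (1 - δ) ^ (2 ^ (n + 1)) ≤ Real.exp (-((2 ^ (n + 1) : ℕ) * δ)) := by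
    have h1 : 1 - δ ≤ Real.exp (-δ) := by
      have := Real.add_one_le_exp (-δ); linarith
    calc (1 - δ) ^ (2 ^ (n + 1)) ≤ Real.exp (-δ) ^ (2 ^ (n + 1)) :=
          pow_le_pow_left₀ (by linarith) h1 _
      _ = Real.exp (-((2 ^ (n + 1) : ℕ) * δ)) := by
          rw [← Real.exp_nat_mul]; ring_nf
  have step2 : Real.exp (-((2 ^ (n + 1) : ℕ) * δ)) ≤ 4 / B ^ 2 := by
    calc Real.exp (-((2 ^ (n + 1) : ℕ) * δ)) ≤ Real.exp (-B) :=
          Real.exp_le_exp.2 (by linarith)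
      _ ≤ 4 / B ^ 2 := aux_exp_neg_le B hBpos
  have step3 : 4 / B ^ 2 = 2 * Real.pi * Real.exp 3 * (Real.exp (3 / 4) / 4) ^ n := by
    have h2pi : (0:ℝ) < 2 * Real.pi := by positivity
    have hsq : Real.sqrt (2 * Real.pi) ^ 2 = 2 * Real.pi := Real.sq_sqrt h2pi.le
    rw [hBdef]
    rw [mul_pow, mul_pow, inv_pow, hsq, ← Real.exp_nat_mul, div_pow,
      ← Real.exp_nat_mul]
    have he : Real.exp (((2:ℕ):ℝ) * -((3 * (n:ℝ) + 12) / 8))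
        = (Real.exp 3)⁻¹ * (Real.exp ((n:ℝ) * (3 / 4)))⁻¹ := by
      rw [← Real.exp_neg, ← Real.exp_neg, ← Real.exp_add]
      push_cast
      ring_nf
    rw [he]
    have hp : ((2:ℝ) ^ (n + 1)) ^ 2 = 4 * 4 ^ n := by
      rw [← pow_mul, show (4:ℝ) = 2 ^ 2 by norm_num, ← pow_mul, ← pow_add]
      congr 1
      ring
    rw [hp]
    have h4 : (0:ℝ) < 4 ^ n := by positivity
    field_simp
  calc (1 - δ) ^ (2 ^ (n + 1)) ≤ 4 / B ^ 2 := le_trans step1 step2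
    _ = _ := step3

lemma aux_det (d : ℕ) (hd : 0 < d) (s α β γ θ : ℝ) (q : ℝ≥0∞)
    (hq0 : 0 < q) (hq : q ≠ ∞)
    (hsum : s + d / 2 + α = 0) (hθ : θ ≥ -(1 / 2) - 1 / q.toReal)
    (g : ℕ × (Fin d → Bool) × (Fin d → ℤ) → ℝ) (N : ℕ)
    (h : ∀ n ≥ N, ∃ k < 2 ^ (n + 1),
      Real.sqrt ((n : ℝ) + 2) / 2 < |g (n + 1, auxT d, auxM d k)|) :
    besovNorm d s ∞ q (fun j t m => priorCoef d α β γ θ j m * g (j, t, m)) = ∞ := by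
  set qr := q.toReal with hqr
  have hqr0 : 0 < qr := ENNReal.toReal_pos hq0.ne' hq
  set cb := min ((2:ℝ) ^ β) 1 with hcb
  have hcb0 : 0 < cb := lt_min (Real.rpow_pos_of_pos two_pos β) one_pos
  -- the embedding
  have hTne : ¬ (auxT d = fun _ => false) := by
    intro hcon
    have := congrFun hcon ⟨0, hd⟩
    simp [auxT] at this
  set emb : ℕ → JIdx d := fun n =>
    ⟨(n + N + 1, auxT d), by
      constructor
      · intro hcon; exact absurd hcon hTne
      · intro hcon; omega⟩ with hemb
  have hembinj : Function.Injective emb := by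
    intro a b hab
    have := congrArg (fun x : JIdx d => x.1.1) hab
    simpa [hemb] using this
  -- the summand function
  set F : JIdx d → ℝ≥0∞ := fun jt =>
    ENNReal.ofReal ((2 : ℝ) ^ ((jt.1.1 : ℝ) * (s + (d : ℝ) / 2 - d * ((∞ : ℝ≥0∞)⁻¹).toReal))) *
      lpNorm ∞ (fun m : Fin d → ℤ =>
        ENNReal.ofReal |priorCoef d α β γ θ jt.1.1 m * g (jt.1.1, jt.1.2, m)|) with hF
  -- lower bound for each term
  have key : ∀ n : ℕ, ENNReal.ofReal ((cb / 2) ^ qr) *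
      ENNReal.ofReal (((n : ℝ) + N + 2)⁻¹) ≤ F (emb n) ^ qr := by
    intro n
    obtain ⟨k, hk, hgk⟩ := h (n + N) (by omega)
    set j := n + N + 1 with hj
    -- the coefficient value
    have hzn : znorm (auxM d k) = k := znorm_auxM hd k
    have hk2 : (k : ℝ) ≤ 2 ^ j := by
      have : (k : ℝ) < 2 ^ j := by exact_mod_cast hk
      linarith
    have hzle : 1 ≤ 1 + znorm (auxM d k) / 2 ^ j ∧ 1 + znorm (auxM d k) / 2 ^ j ≤ 2 := by
      have h0 : (0:ℝ) < 2 ^ j := by positivity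
      rw [hzn]
      constructor
      · have : (0:ℝ) ≤ (k : ℝ) / 2 ^ j := by positivity
        linarith
      · have : (k : ℝ) / 2 ^ j ≤ 1 := (div_le_one h0).2 hk2
        linarith
    have hw : cb ≤ (1 + znorm (auxM d k) / 2 ^ j) ^ β := aux_w hzle.1 hzle.2
    have hcoef : (2:ℝ) ^ ((j : ℝ) * α) * ((j : ℝ) + 1) ^ θ * cb * (Real.sqrt ((j : ℝ) + 1) / 2)
        ≤ priorCoef d α β γ θ j (auxM d k) * |g (j, auxT d, auxM d k)| := by
      rw [priorCoef, if_neg (by omega : ¬ j = 0)]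
      have h1 : Real.sqrt ((j : ℝ) + 1) / 2 ≤ |g (j, auxT d, auxM d k)| := by
        have : ((n + N : ℕ) : ℝ) + 2 = (j : ℝ) + 1 := by rw [hj]; push_cast; ring
        rw [← this]
        exact le_of_lt (by exact_mod_cast hgk)
      have hθpos : (0:ℝ) < ((j : ℝ) + 1) ^ θ := Real.rpow_pos_of_pos (by positivity) θ
      have h2pos : (0:ℝ) < (2:ℝ) ^ ((j : ℝ) * α) := Real.rpow_pos_of_pos two_pos _
      have hsq : (0:ℝ) ≤ Real.sqrt ((j : ℝ) + 1) / 2 := by positivity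
      calc (2:ℝ) ^ ((j : ℝ) * α) * ((j : ℝ) + 1) ^ θ * cb * (Real.sqrt ((j : ℝ) + 1) / 2)
          ≤ (2:ℝ) ^ ((j : ℝ) * α) * ((j : ℝ) + 1) ^ θ *
            ((1 + znorm (auxM d k) / 2 ^ j) ^ β) * |g (j, auxT d, auxM d k)| := by
            apply mul_le_mul
            · apply mul_le_mul_of_nonneg_left hw (by positivity)
            · exact h1
            · exact hsq
            · have h0 : (0:ℝ) < 1 + znorm (auxM d k) / 2 ^ j := by rw [hzn]; positivity
              exact mul_nonneg (mul_nonneg (Real.rpow_pos_of_pos two_pos _).le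
                (Real.rpow_pos_of_pos (by positivity) θ).le)
                (Real.rpow_pos_of_pos h0 β).le
        _ = _ := by ring
    -- lower bound the sup by the value at auxM d k
    have hsup : ENNReal.ofReal ((2:ℝ) ^ ((j : ℝ) * α) * ((j : ℝ) + 1) ^ θ * cb *
          (Real.sqrt ((j : ℝ) + 1) / 2)) ≤
        lpNorm ∞ (fun m : Fin d → ℤ =>
          ENNReal.ofReal |priorCoef d α β γ θ j m * g (j, auxT d, m)|) := by
      rw [_root_.lpNorm, if_pos rfl]
      refine le_trans ?_ (le_iSup _ (auxM d k))
      apply ENNReal.ofReal_le_ofReal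
      rw [abs_mul]
      have hcnn : 0 ≤ priorCoef d α β γ θ j (auxM d k) := by
        rw [priorCoef]
        have h1 : (0:ℝ) ≤ 1 + znorm (auxM d k) / 2 ^ j := by linarith [hzle.1]
        positivity
      rw [abs_of_nonneg hcnn]
      exact hcoef
    -- combine with the 2^{j(s+d/2)} factor
    have hFn : ENNReal.ofReal (cb / 2 * (((j : ℝ) + 1) ^ (θ + 1/2))) ≤ F (emb n) := by
      rw [hF]
      simp only
      have hjj : ((emb n).1.1 : ℕ) = j := rfl
      calc ENNReal.ofReal (cb / 2 * (((j : ℝ) + 1) ^ (θ + 1/2)))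
          = ENNReal.ofReal ((2:ℝ) ^ ((j : ℝ) * (s + (d : ℝ) / 2 - d * ((∞ : ℝ≥0∞)⁻¹).toReal))) *
            ENNReal.ofReal ((2:ℝ) ^ ((j : ℝ) * α) * ((j : ℝ) + 1) ^ θ * cb *
              (Real.sqrt ((j : ℝ) + 1) / 2)) := by
            rw [← ENNReal.ofReal_mul (by positivity)]
            congr 1
            have hinv : ((∞ : ℝ≥0∞)⁻¹).toReal = 0 := by simp
            rw [hinv]
            have hexp : (2:ℝ) ^ ((j : ℝ) * (s + (d : ℝ) / 2 - (d : ℝ) * 0)) *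
                (2:ℝ) ^ ((j : ℝ) * α) = 1 := by
              rw [← Real.rpow_add two_pos]
              have : (j : ℝ) * (s + (d : ℝ) / 2 - (d : ℝ) * 0) + (j : ℝ) * α
                  = (j : ℝ) * (s + (d : ℝ) / 2 + α) := by ring
              rw [this, hsum, mul_zero, Real.rpow_zero]
            have hsqrt : Real.sqrt ((j : ℝ) + 1) = ((j : ℝ) + 1) ^ (1/2 : ℝ) :=
              Real.sqrt_eq_rpow _
            have hpow : ((j : ℝ) + 1) ^ θ * ((j : ℝ) + 1) ^ (1/2 : ℝ)
                = ((j : ℝ) + 1) ^ (θ + 1/2) := by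
              rw [← Real.rpow_add (by positivity)]
            rw [hsqrt]
            calc cb / 2 * (((j : ℝ) + 1) ^ (θ + 1/2))
                = 1 * ((((j : ℝ) + 1) ^ θ * ((j : ℝ) + 1) ^ (1/2 : ℝ)) * (cb / 2)) := by
                  rw [hpow]; ring
              _ = (2 ^ ((j:ℝ) * (s + (d : ℝ) / 2 - (d : ℝ) * 0)) * 2 ^ ((j:ℝ) * α)) *
                  ((((j : ℝ) + 1) ^ θ * ((j : ℝ) + 1) ^ (1/2 : ℝ)) * (cb / 2)) := by
                  rw [hexp]
              _ = _ := by ring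
      _ ≤ _ := mul_le_mul_right hsup _
    -- raise to the power qr
    have hj1 : ((j : ℝ) + 1) = (n : ℝ) + N + 2 := by rw [hj]; push_cast; ring
    have hexpge : (-1 : ℝ) ≤ (θ + 1/2) * qr := by
      have h1 : -(1/qr) ≤ θ + 1/2 := by linarith [hθ]
      have h2 : -(1/qr) * qr ≤ (θ + 1/2) * qr := mul_le_mul_of_nonneg_right h1 hqr0.le
      have h3 : -(1/qr) * qr = -1 := by field_simp
      linarith
    have hh : ((n : ℝ) + N + 2)⁻¹ ≤ ((j : ℝ) + 1) ^ ((θ + 1/2) * qr) := by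
      calc ((n : ℝ) + N + 2)⁻¹ = ((j : ℝ) + 1) ^ (-1 : ℝ) := by
            rw [Real.rpow_neg_one, hj1]
        _ ≤ _ := Real.rpow_le_rpow_of_exponent_le
            (by have : (0:ℝ) ≤ (j : ℝ) := Nat.cast_nonneg j; linarith) hexpge
    calc ENNReal.ofReal ((cb / 2) ^ qr) * ENNReal.ofReal (((n : ℝ) + N + 2)⁻¹)
        = ENNReal.ofReal ((cb / 2) ^ qr * ((n : ℝ) + N + 2)⁻¹) := by
          rw [← ENNReal.ofReal_mul (by positivity)]
      _ ≤ ENNReal.ofReal ((cb / 2) ^ qr * ((j : ℝ) + 1) ^ ((θ + 1/2) * qr)) := by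
          apply ENNReal.ofReal_le_ofReal
          exact mul_le_mul_of_nonneg_left hh (by positivity)
      _ = ENNReal.ofReal (cb / 2 * (((j : ℝ) + 1) ^ (θ + 1/2))) ^ qr := by
          rw [ENNReal.ofReal_rpow_of_nonneg (by positivity) hqr0.le,
            Real.mul_rpow (by positivity) (Real.rpow_nonneg (by positivity) _),
            ← Real.rpow_mul (by positivity)]
      _ ≤ F (emb n) ^ qr := ENNReal.rpow_le_rpow hFn hqr0.le
  -- conclude
  have hS : ∑' jt : JIdx d, F jt ^ qr = ⊤ := by
    rw [← top_le_iff]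
    calc (⊤ : ℝ≥0∞) = ENNReal.ofReal ((cb / 2) ^ qr) *
          ∑' n : ℕ, ENNReal.ofReal (((n : ℝ) + N + 2)⁻¹) := by
          rw [aux_harmonic N, ENNReal.mul_top
            (ne_of_gt (ENNReal.ofReal_pos.2 (by positivity)))]
      _ = ∑' n : ℕ, ENNReal.ofReal ((cb / 2) ^ qr) * ENNReal.ofReal (((n : ℝ) + N + 2)⁻¹) :=
          ENNReal.tsum_mul_left.symm
      _ ≤ ∑' n : ℕ, F (emb n) ^ qr := ENNReal.tsum_le_tsum key
      _ ≤ ∑' jt : JIdx d, F jt ^ qr :=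
          ENNReal.tsum_comp_le_tsum_of_injective hembinj _
  have hgoal : besovNorm d s ∞ q (fun j t m => priorCoef d α β γ θ j m * g (j, t, m))
      = lpNorm q F := rfl
  rw [hgoal, _root_.lpNorm, if_neg hq, ← hqr, hS]
  exact ENNReal.top_rpow_of_pos (by positivity)


/-- Let `q ∈ (0,∞)` and let `X` be standard normal. If `a` follows a
Besov sequence prior with parameters `(α,β,γ,θ)` and template random variable `X`,
`s + d/2 + α = 0` and `θ ≥ -1/2 - 1/q`, then almost surely `‖a‖_{b^s_{∞,q}} = ∞`. -/
theorem stmt13 (d : ℕ) (hd : 0 < d) (s α β γ θ : ℝ) (q : ℝ≥0∞)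
    (hq0 : 0 < q) (hq : q ≠ ∞)
    {Ω : Type*} [MeasurableSpace Ω] (μ : Measure Ω) [IsProbabilityMeasure μ]
    (X : Ω → ℝ) (hX : Measurable X)
    (hGauss : Measure.map X μ = gaussianReal 0 1)
    (ξ : ℕ × (Fin d → Bool) × (Fin d → ℤ) → Ω → ℝ)
    (hmeas : ∀ i, Measurable (ξ i))
    (hindep : iIndepFun ξ μ)
    (hident : ∀ i, IdentDistrib (ξ i) X μ μ)
    (hsum : s + d / 2 + α = 0) (hθ : θ ≥ -(1 / 2) - 1 / q.toReal) :
    ∀ᵐ ω ∂μ,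
      besovNorm d s ∞ q (fun j t m => priorCoef d α β γ θ j m * ξ (j, t, m) ω) = ∞ := by
  have hae : ∀ᵐ ω ∂μ, ∀ᶠ (n : ℕ) in Filter.atTop,
      ∃ k < 2 ^ (n + 1), Real.sqrt ((n : ℝ) + 2) / 2 < |ξ (n + 1, auxT d, auxM d k) ω| := by
    set c : ℕ → ℝ := fun n => Real.sqrt ((n : ℝ) + 2) / 2 with hc
    set bad : ℕ → Set Ω := fun n =>
      ⋂ k ∈ Finset.range (2 ^ (n + 1)), {ω | |ξ (n + 1, auxT d, auxM d k) ω| ≤ c n} with hbaddef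
    have hmap : ∀ i, μ.map (ξ i) = gaussianReal 0 1 := fun i => (hident i).map_eq.trans hGauss
    have hone : ∀ i (x : ℝ), 0 ≤ x → μ {ω | |ξ i ω| ≤ x} ≤
        ENNReal.ofReal (1 - (Real.sqrt (2 * Real.pi))⁻¹ * Real.exp (-(x + 1) ^ 2 / 2)) := by
      intro i x hx
      have hS : MeasurableSet {y : ℝ | |y| ≤ x} :=
        measurableSet_le continuous_abs.measurable measurable_const
      have heq : {ω | |ξ i ω| ≤ x} = ξ i ⁻¹' {y | |y| ≤ x} := rfl
      rw [heq, ← Measure.map_apply (hmeas i) hS, hmap i]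
      exact aux_gauss_tail x hx
    have hbadm : ∀ n, μ (bad n) ≤
        ENNReal.ofReal (2 * Real.pi * Real.exp 3 * (Real.exp (3 / 4) / 4) ^ n) := by
      intro n
      set f : ℕ → ℕ × (Fin d → Bool) × (Fin d → ℤ) := fun k => (n + 1, auxT d, auxM d k) with hf
      have hfinj : Function.Injective f := by
        intro k k' h
        exact auxM_inj hd (congrArg (fun p => p.2.2) h)
      set sn : ℕ × (Fin d → Bool) × (Fin d → ℤ) → Set Ω := fun i => {ω | |ξ i ω| ≤ c n} with hsn
      have hprod : μ (⋂ i ∈ (Finset.range (2 ^ (n + 1))).image f, sn i)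
          = ∏ i ∈ (Finset.range (2 ^ (n + 1))).image f, μ (sn i) := by
        apply hindep.meas_biInter
        intro i _
        exact ⟨{y | |y| ≤ c n}, measurableSet_le continuous_abs.measurable measurable_const, rfl⟩
      have hset : bad n = ⋂ i ∈ (Finset.range (2 ^ (n + 1))).image f, sn i := by
        ext ω
        simp [hbaddef, hsn, hf, Finset.mem_image]
      have hcn : 0 ≤ c n := by positivity
      calc μ (bad n) = ∏ i ∈ (Finset.range (2 ^ (n + 1))).image f, μ (sn i) := by
            rw [hset, hprod]
        _ = ∏ k ∈ Finset.range (2 ^ (n + 1)), μ (sn (f k)) :=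
            Finset.prod_image (fun a _ b _ h => hfinj h)
        _ ≤ ∏ _k ∈ Finset.range (2 ^ (n + 1)), ENNReal.ofReal
              (1 - (Real.sqrt (2 * Real.pi))⁻¹ * Real.exp (-(c n + 1) ^ 2 / 2)) :=
            Finset.prod_le_prod' (fun k _ => hone (f k) (c n) hcn)
        _ = ENNReal.ofReal ((1 - (Real.sqrt (2 * Real.pi))⁻¹ *
              Real.exp (-(c n + 1) ^ 2 / 2)) ^ (2 ^ (n + 1))) := by
            rw [Finset.prod_const, Finset.card_range, ENNReal.ofReal_pow
              (by linarith [aux_delta_le_one (c n)])]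
        _ ≤ ENNReal.ofReal (2 * Real.pi * Real.exp 3 * (Real.exp (3 / 4) / 4) ^ n) :=
            ENNReal.ofReal_le_ofReal (aux_real_bound n)
    have hr1 : Real.exp (3 / 4) / 4 < 1 := by
      have h1 : Real.exp (3 / 4) ≤ Real.exp 1 := Real.exp_le_exp.2 (by norm_num)
      have h2 := Real.exp_one_lt_d9
      rw [div_lt_one (by norm_num)]
      nlinarith
    have hsummable : Summable (fun n : ℕ =>
        2 * Real.pi * Real.exp 3 * (Real.exp (3 / 4) / 4) ^ n) :=
      (summable_geometric_of_lt_one (by positivity) hr1).mul_left _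
    have htsum : ∑' n, μ (bad n) ≠ ⊤ := by
      apply ne_top_of_le_ne_top _ (ENNReal.tsum_le_tsum hbadm)
      rw [← ENNReal.ofReal_tsum_of_nonneg (fun n => by positivity) hsummable]
      exact ENNReal.ofReal_ne_top
    filter_upwards [ae_eventually_notMem htsum] with ω hω
    filter_upwards [hω] with n hn
    rw [hbaddef] at hn
    simp only [Set.mem_iInter, Finset.mem_range, Set.mem_setOf_eq, not_forall] at hn
    obtain ⟨k, hk, hlt⟩ := hn
    exact ⟨k, hk, by push_neg at hlt; exact hlt⟩
  filter_upwards [hae] with ω hω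
  obtain ⟨N, hN⟩ := Filter.eventually_atTop.1 hω
  exact aux_det d hd s α β γ θ q hq0 hq hsum hθ (fun i => ξ i ω) N hN


end
end

section
/- Let n ∈ ℕ, ρ ∈ (0,1), σ ∈ (0,∞), and let X be a binomially distributed random variable with parameters n and ρ (X ∼ Bin(n,ρ)). Then there exists a constant C > 0 depending only on σ such that E[X^σ] ≤ C · max{nρ, (nρ)^σ}. -/
open MeasureTheory ProbabilityTheory ENNReal

noncomputable section


lemma aux1 (σ : ℝ) (hσ : 0 < σ) {y : ℝ} (hy : 0 ≤ y) :
    y ^ σ ≤ σ ^ σ * Real.exp (y - σ) := by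
  rcases eq_or_lt_of_le hy with h | h
  · rw [← h, Real.zero_rpow hσ.ne']
    positivity
  · have hlog : Real.log (y / σ) ≤ y / σ - 1 :=
      Real.log_le_sub_one_of_pos (by positivity)
    rw [Real.log_div h.ne' hσ.ne'] at hlog
    have h2 : σ * Real.log y ≤ σ * Real.log σ + (y - σ) := by
      have := mul_le_mul_of_nonneg_left hlog hσ.le
      rw [mul_sub] at this
      have hd : σ * (y / σ - 1) = y - σ := by field_simp
      nlinarith [this]
    calc y ^ σ = Real.exp (σ * Real.log y) := by
          rw [Real.rpow_def_of_pos h, mul_comm]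
      _ ≤ Real.exp (σ * Real.log σ + (y - σ)) := Real.exp_le_exp.2 h2
      _ = σ ^ σ * Real.exp (y - σ) := by
          rw [Real.exp_add, Real.rpow_def_of_pos hσ, mul_comm σ (Real.log σ)]

lemma aux2 (σ : ℝ) (hσ : 0 < σ) {t x : ℝ} (ht : 0 < t) (hx : 0 ≤ x) :
    x ^ σ ≤ (σ / t) ^ σ * Real.exp (-σ) * Real.exp (t * x) := by
  have h1 : (t * x) ^ σ = t ^ σ * x ^ σ := Real.mul_rpow ht.le hx
  have h2 := aux1 σ hσ (mul_nonneg ht.le hx)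
  rw [h1] at h2
  have ht' : 0 < t ^ σ := Real.rpow_pos_of_pos ht σ
  have h3 : Real.exp (t * x - σ) = Real.exp (-σ) * Real.exp (t * x) := by
    rw [← Real.exp_add]; ring_nf
  rw [Real.div_rpow hσ.le ht.le, div_mul_eq_mul_div, div_mul_eq_mul_div,
    le_div_iff₀ ht']
  calc x ^ σ * t ^ σ = t ^ σ * x ^ σ := mul_comm _ _
    _ ≤ σ ^ σ * Real.exp (t * x - σ) := h2
    _ = σ ^ σ * Real.exp (-σ) * Real.exp (t * x) := by rw [h3]; ring

open Finset

lemma caseA (σ : ℝ) (hσ : 0 < σ) (n : ℕ) (hn : 0 < n) (ρ : ℝ) (hρ0 : 0 < ρ)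
    (hρ1 : ρ < 1) (ha : (n:ℝ) * ρ < 1) :
    ∑ k ∈ Finset.range (n+1), (k:ℝ)^σ * ((n.choose k : ℝ) * ρ^k * (1-ρ)^(n-k))
      ≤ σ^σ * Real.exp (1 + Real.exp 1 - σ) * ((n:ℝ) * ρ) := by
  obtain ⟨m, rfl⟩ : ∃ m, n = m + 1 := ⟨n-1, (Nat.succ_pred_eq_of_pos hn).symm⟩
  clear hn
  set n := m + 1 with hnm
  set e := Real.exp 1 with he
  have he1 : 1 ≤ e := by rw [he]; nlinarith [Real.add_one_le_exp (1:ℝ)]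
  have h1ρ : (0:ℝ) ≤ 1 - ρ := by linarith
  rw [Finset.sum_range_succ']
  have h0 : (0:ℝ)^σ * ((n.choose 0 : ℝ) * ρ^0 * (1-ρ)^(n-0)) = 0 := by
    rw [Real.zero_rpow hσ.ne']; ring
  push_cast [h0]
  rw [add_zero]
  have key : ∀ i ∈ Finset.range n,
      ((i:ℝ)+1)^σ * ((n.choose (i+1) : ℝ) * ρ^(i+1) * (1-ρ)^(n-(i+1)))
        ≤ (σ^σ * Real.exp (-σ) * e * ((n:ℝ)*ρ)) * ((e*ρ)^i * (1:ℝ)^(m-i) * (m.choose i : ℝ)) := by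
    intro i hi
    have hiρ : (0:ℝ) ≤ ρ^(i+1) := by positivity
    have hb1 : ((n.choose (i+1) : ℝ) * ρ^(i+1) * (1-ρ)^(n-(i+1)))
        ≤ (n.choose (i+1) : ℝ) * ρ^(i+1) := by
      have : (1-ρ)^(n-(i+1)) ≤ 1 := pow_le_one₀ h1ρ (by linarith)
      have hcn : (0:ℝ) ≤ (n.choose (i+1) : ℝ) := Nat.cast_nonneg _
      exact mul_le_of_le_one_right (mul_nonneg hcn hiρ) this
    have hchoose : (n.choose (i+1) : ℝ) ≤ (n : ℝ) * (m.choose i : ℝ) := by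
      have h1 := Nat.add_one_mul_choose_eq m i
      have h2 : (n.choose (i+1)) ≤ n * (m.choose i) := by
        calc n.choose (i+1) ≤ n.choose (i+1) * (i+1) :=
              Nat.le_mul_of_pos_right _ i.succ_pos
          _ = n * (m.choose i) := h1.symm
      exact_mod_cast h2
    have hk : ((i:ℝ)+1)^σ ≤ σ^σ * Real.exp (-σ) * Real.exp ((i:ℝ)+1) := by
      have h3 := aux1 σ hσ (by positivity : (0:ℝ) ≤ (i:ℝ)+1)
      calc ((i:ℝ)+1)^σ ≤ σ^σ * Real.exp ((i:ℝ)+1 - σ) := h3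
        _ = σ^σ * Real.exp (-σ) * Real.exp ((i:ℝ)+1) := by
            rw [mul_assoc, ← Real.exp_add]; ring_nf
    have hexp : Real.exp ((i:ℝ)+1) = e * e^i := by
      rw [he, ← Real.exp_nat_mul, ← Real.exp_add]; ring_nf
    have hbnn : (0:ℝ) ≤ (n.choose (i+1) : ℝ) * ρ^(i+1) * (1-ρ)^(n-(i+1)) := by positivity
    have hknn : (0:ℝ) ≤ ((i:ℝ)+1)^σ := Real.rpow_nonneg (by positivity) σ
    calc ((i:ℝ)+1)^σ * ((n.choose (i+1) : ℝ) * ρ^(i+1) * (1-ρ)^(n-(i+1)))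
        ≤ (σ^σ * Real.exp (-σ) * Real.exp ((i:ℝ)+1)) * ((n.choose (i+1) : ℝ) * ρ^(i+1)) :=
          mul_le_mul hk hb1 hbnn (le_trans hknn hk)
      _ ≤ (σ^σ * Real.exp (-σ) * Real.exp ((i:ℝ)+1)) * ((n : ℝ) * (m.choose i : ℝ) * ρ^(i+1)) := by
          have hpos : (0:ℝ) ≤ σ^σ * Real.exp (-σ) * Real.exp ((i:ℝ)+1) := by positivity
          exact mul_le_mul_of_nonneg_left (mul_le_mul_of_nonneg_right hchoose hiρ) hpos
      _ = (σ^σ * Real.exp (-σ) * e * ((n:ℝ)*ρ)) * ((e*ρ)^i * (1:ℝ)^(m-i) * (m.choose i : ℝ)) := by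
          rw [hexp, mul_pow, pow_succ, one_pow]; ring
  calc ∑ i ∈ Finset.range n, ((i:ℝ)+1)^σ * ((n.choose (i+1) : ℝ) * ρ^(i+1) * (1-ρ)^(n-(i+1)))
      ≤ ∑ i ∈ Finset.range n, (σ^σ * Real.exp (-σ) * e * ((n:ℝ)*ρ)) * ((e*ρ)^i * (1:ℝ)^(m-i) * (m.choose i : ℝ)) :=
        Finset.sum_le_sum key
    _ = (σ^σ * Real.exp (-σ) * e * ((n:ℝ)*ρ)) * ∑ i ∈ Finset.range (m+1), (e*ρ)^i * (1:ℝ)^(m-i) * (m.choose i : ℝ) := by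
        rw [Finset.mul_sum]
    _ = (σ^σ * Real.exp (-σ) * e * ((n:ℝ)*ρ)) * (e*ρ + 1)^m := by
        rw [← add_pow]
    _ ≤ σ^σ * Real.exp (1 + e - σ) * ((n:ℝ)*ρ) := by
        have hb : (e*ρ + 1)^m ≤ Real.exp e := by
          have h1 : e*ρ + 1 ≤ Real.exp (e*ρ) := by
            have := Real.add_one_le_exp (e*ρ); linarith
          have h2 : (e*ρ+1)^m ≤ Real.exp (e*ρ)^m :=
            pow_le_pow_left₀ (by positivity) h1 m
          have h3 : Real.exp (e*ρ)^m = Real.exp ((m:ℝ)*(e*ρ)) := by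
            rw [← Real.exp_nat_mul]
          have h4 : (m:ℝ)*(e*ρ) ≤ e := by
            have hm : (m:ℝ) * ρ ≤ 1 := by
              have : ((n:ℝ)) = (m:ℝ) + 1 := by rw [hnm]; push_cast; ring
              nlinarith
            nlinarith [Real.exp_pos (1:ℝ)]
          calc (e*ρ+1)^m ≤ Real.exp ((m:ℝ)*(e*ρ)) := by rw [← h3]; exact h2
            _ ≤ Real.exp e := Real.exp_le_exp.2 h4
        have hc : σ^σ * Real.exp (-σ) * e * Real.exp e = σ^σ * Real.exp (1 + e - σ) := by
          rw [show (1:ℝ) + e - σ = -σ + 1 + e by ring, Real.exp_add, Real.exp_add, he]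
          ring
        have hnn : (0:ℝ) ≤ σ^σ * Real.exp (-σ) * e * ((n:ℝ)*ρ) := by positivity
        calc σ^σ * Real.exp (-σ) * e * ((n:ℝ)*ρ) * (e*ρ + 1)^m
            ≤ σ^σ * Real.exp (-σ) * e * ((n:ℝ)*ρ) * Real.exp e :=
              mul_le_mul_of_nonneg_left hb hnn
          _ = σ^σ * Real.exp (1 + e - σ) * ((n:ℝ)*ρ) := by rw [← hc]; ring
    _ = σ^σ * Real.exp (1 + e - σ) * (((m:ℝ)+1)*ρ) := by
        have : (n:ℝ) = (m:ℝ)+1 := by rw [hnm]; push_cast; ring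
        rw [this]
    _ = σ^σ * Real.exp (1 + e - σ) * ((n:ℝ)*ρ) := by rw [hnm]; push_cast; ring
lemma caseB (σ : ℝ) (hσ : 0 < σ) (n : ℕ) (ρ : ℝ) (hρ0 : 0 < ρ)
    (hρ1 : ρ < 1) (ha : 1 ≤ (n:ℝ) * ρ) :
    ∑ k ∈ Finset.range (n+1), (k:ℝ)^σ * ((n.choose k : ℝ) * ρ^k * (1-ρ)^(n-k))
      ≤ (max 1 σ)^σ * Real.exp ((Real.exp 1 - 1)*σ) * ((n:ℝ)*ρ)^σ := by
  set e := Real.exp 1 with he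
  set a := (n:ℝ)*ρ with haa
  set M := max a σ with hM
  have hMpos : 0 < M := lt_of_lt_of_le hσ (le_max_right a σ)
  have haM : a ≤ M := le_max_left a σ
  set t := σ / M with htdef
  have ht : 0 < t := div_pos hσ hMpos
  have ht1 : t ≤ 1 := (div_le_one hMpos).2 (le_max_right a σ)
  have hst : σ / t = M := by
    rw [htdef]; field_simp
  have h1ρ : (0:ℝ) ≤ 1 - ρ := by linarith
  have hexpt1 : 1 ≤ Real.exp t := Real.one_le_exp ht.le
  -- termwise bound
  have key : ∀ k ∈ Finset.range (n+1),
      (k:ℝ)^σ * ((n.choose k : ℝ) * ρ^k * (1-ρ)^(n-k))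
        ≤ (M^σ * Real.exp (-σ)) * ((ρ * Real.exp t)^k * (1-ρ)^(n-k) * (n.choose k : ℝ)) := by
    intro k _
    have hk := aux2 σ hσ ht (Nat.cast_nonneg k : (0:ℝ) ≤ (k:ℝ))
    rw [hst] at hk
    have hbnn : (0:ℝ) ≤ (n.choose k : ℝ) * ρ^k * (1-ρ)^(n-k) := by positivity
    have hknn : (0:ℝ) ≤ (k:ℝ)^σ := Real.rpow_nonneg (Nat.cast_nonneg k) σ
    have hexpk : Real.exp (t*(k:ℝ)) = (Real.exp t)^k := by
      rw [← Real.exp_nat_mul]; ring_nf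
    calc (k:ℝ)^σ * ((n.choose k : ℝ) * ρ^k * (1-ρ)^(n-k))
        ≤ (M^σ * Real.exp (-σ) * Real.exp (t*(k:ℝ))) * ((n.choose k : ℝ) * ρ^k * (1-ρ)^(n-k)) :=
          mul_le_mul_of_nonneg_right hk hbnn
      _ = (M^σ * Real.exp (-σ)) * ((ρ * Real.exp t)^k * (1-ρ)^(n-k) * (n.choose k : ℝ)) := by
          rw [hexpk, mul_pow]; ring
  have hMσ : (0:ℝ) ≤ M^σ * Real.exp (-σ) := by positivity
  calc ∑ k ∈ Finset.range (n+1), (k:ℝ)^σ * ((n.choose k : ℝ) * ρ^k * (1-ρ)^(n-k))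
      ≤ ∑ k ∈ Finset.range (n+1), (M^σ * Real.exp (-σ)) * ((ρ * Real.exp t)^k * (1-ρ)^(n-k) * (n.choose k : ℝ)) :=
        Finset.sum_le_sum key
    _ = (M^σ * Real.exp (-σ)) * (ρ * Real.exp t + (1-ρ))^n := by
        rw [← Finset.mul_sum, ← add_pow]
    _ ≤ (M^σ * Real.exp (-σ)) * Real.exp (σ * e) := by
        apply mul_le_mul_of_nonneg_left _ hMσ
        have hbase : ρ * Real.exp t + (1-ρ) = 1 + ρ*(Real.exp t - 1) := by ring
        have hbase0 : (0:ℝ) ≤ ρ * Real.exp t + (1-ρ) := by nlinarith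
        have h1 : ρ * Real.exp t + (1-ρ) ≤ Real.exp (ρ*(Real.exp t - 1)) := by
          rw [hbase]
          have := Real.add_one_le_exp (ρ*(Real.exp t - 1)); linarith
        have h2 : (ρ * Real.exp t + (1-ρ))^n ≤ Real.exp ((n:ℝ)*(ρ*(Real.exp t - 1))) := by
          calc (ρ * Real.exp t + (1-ρ))^n ≤ (Real.exp (ρ*(Real.exp t - 1)))^n :=
                pow_le_pow_left₀ hbase0 h1 n
            _ = Real.exp ((n:ℝ)*(ρ*(Real.exp t - 1))) := by rw [← Real.exp_nat_mul]
        have h3 : Real.exp t - 1 ≤ t * e := by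
          have hA := Real.add_one_le_exp (-t)
          have hB : Real.exp (-t) = 1 / Real.exp t := by
            rw [Real.exp_neg]; ring
          have hC : Real.exp t * (1 - t) ≤ 1 := by
            have h := mul_le_mul_of_nonneg_left (Real.add_one_le_exp (-t)) (Real.exp_pos t).le
            rw [← Real.exp_add] at h
            simp only [add_neg_cancel, Real.exp_zero, mul_one] at h
            calc Real.exp t * (1-t) = Real.exp t * (-t+1) := by ring
              _ ≤ 1 := h
          have hD : Real.exp t ≤ e := by rw [he]; exact Real.exp_le_exp.2 ht1
          nlinarith [Real.exp_pos t]
        have h4 : (n:ℝ)*(ρ*(Real.exp t - 1)) ≤ σ * e := by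
          have hnρ : (0:ℝ) ≤ a := by linarith
          have h5 : (n:ℝ)*(ρ*(Real.exp t - 1)) ≤ a * (t*e) := by
            have : (n:ℝ)*(ρ*(Real.exp t - 1)) = a * (Real.exp t - 1) := by rw [haa]; ring
            rw [this]
            exact mul_le_mul_of_nonneg_left h3 hnρ
          have h6 : a * (t*e) ≤ σ * e := by
            have h7 : a * t ≤ σ := by
              rw [htdef]
              rw [mul_div_assoc', div_le_iff₀ hMpos]
              nlinarith
            have he0 : (0:ℝ) ≤ e := by rw [he]; positivity
            nlinarith
          linarith
        exact le_trans h2 (Real.exp_le_exp.2 h4)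
    _ ≤ (max 1 σ)^σ * Real.exp ((e - 1)*σ) * a^σ := by
        have hMa : M ≤ a * max 1 σ := by
          rw [hM]
          rcases max_cases a σ with ⟨h,_⟩|⟨h,_⟩ <;> rw [h]
          · nlinarith [le_max_left (1:ℝ) σ]
          · nlinarith [le_max_right (1:ℝ) σ]
        have hMrp : M^σ ≤ a^σ * (max 1 σ)^σ := by
          calc M^σ ≤ (a * max 1 σ)^σ := Real.rpow_le_rpow hMpos.le hMa hσ.le
            _ = a^σ * (max 1 σ)^σ := Real.mul_rpow (by linarith) (by positivity)
        have hee : Real.exp (-σ) * Real.exp (σ*e) = Real.exp ((e-1)*σ) := by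
          rw [← Real.exp_add]; ring_nf
        calc M^σ * Real.exp (-σ) * Real.exp (σ * e)
            ≤ (a^σ * (max 1 σ)^σ) * (Real.exp (-σ) * Real.exp (σ*e)) := by
              have : (0:ℝ) ≤ Real.exp (-σ) * Real.exp (σ*e) := by positivity
              nlinarith [Real.rpow_nonneg (show (0:ℝ) ≤ a by linarith) σ,
                Real.rpow_nonneg (show (0:ℝ) ≤ max 1 σ by positivity) σ]
          _ = (max 1 σ)^σ * Real.exp ((e-1)*σ) * a^σ := by rw [hee]; ring

/-- binomial moments. For every `σ ∈ (0,∞)` there is a constant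
`C > 0` depending only on `σ` such that for every `n ∈ ℕ`, `ρ ∈ (0,1)` and every
random variable `X ∼ Bin(n,ρ)` one has `E[X^σ] ≤ C · max{nρ, (nρ)^σ}`. -/
theorem stmt15 (σ : ℝ) (hσ : 0 < σ) :
    ∃ C : ℝ, 0 < C ∧
      ∀ (n : ℕ), 0 < n → ∀ (ρ : ℝ), 0 < ρ → ρ < 1 →
        ∀ (Ω : Type) [MeasurableSpace Ω] (μ : Measure Ω) [IsProbabilityMeasure μ]
          (X : Ω → ℕ), Measurable X →
          (∀ k : ℕ, μ {ω | X ω = k} =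
            ENNReal.ofReal ((n.choose k : ℝ) * ρ ^ k * (1 - ρ) ^ (n - k))) →
          ∫⁻ ω, ENNReal.ofReal ((X ω : ℝ) ^ σ) ∂μ
            ≤ ENNReal.ofReal (C * max ((n : ℝ) * ρ) (((n : ℝ) * ρ) ^ σ)) := by
  set C1 := σ^σ * Real.exp (1 + Real.exp 1 - σ) with hC1
  set C2 := (max 1 σ)^σ * Real.exp ((Real.exp 1 - 1)*σ) with hC2
  have hC1pos : 0 < C1 := by
    rw [hC1]
    have : (0:ℝ) < σ^σ := Real.rpow_pos_of_pos hσ σ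
    positivity
  have hC2pos : 0 < C2 := by
    rw [hC2]
    have : (0:ℝ) < (max 1 σ)^σ := Real.rpow_pos_of_pos (by positivity) σ
    positivity
  refine ⟨C1 + C2, by linarith, ?_⟩
  intro n hn ρ hρ0 hρ1 Ω _ μ _ X hX hdist
  have hmeas : Measurable (fun k : ℕ => ENNReal.ofReal ((k:ℝ)^σ)) := measurable_from_nat
  have hpre : ∀ k : ℕ, X ⁻¹' {k} = {ω | X ω = k} := fun k => rfl
  have h1 : ∫⁻ ω, ENNReal.ofReal ((X ω : ℝ) ^ σ) ∂μ
      = ∑' k : ℕ, ENNReal.ofReal ((k:ℝ)^σ) * μ {ω | X ω = k} := by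
    have e1 : ∫⁻ ω, ENNReal.ofReal ((X ω : ℝ) ^ σ) ∂μ
        = ∫⁻ k, ENNReal.ofReal ((k:ℝ)^σ) ∂(μ.map X) := (lintegral_map hmeas hX).symm
    rw [e1, lintegral_countable']
    congr 1
    ext k
    rw [Measure.map_apply hX (measurableSet_singleton k), hpre k]
  have h2 : ∑' k : ℕ, ENNReal.ofReal ((k:ℝ)^σ) * μ {ω | X ω = k}
      = ∑ k ∈ Finset.range (n+1), ENNReal.ofReal ((k:ℝ)^σ) * μ {ω | X ω = k} := by
    apply tsum_eq_sum
    intro k hk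
    have hnk : n < k := by simpa [Nat.lt_succ_iff, not_le] using
      (by simpa using hk : ¬ k < n + 1)
    have : μ {ω | X ω = k} = 0 := by
      rw [hdist k, Nat.choose_eq_zero_of_lt hnk]
      simp
    rw [this, mul_zero]
  have h3 : ∑ k ∈ Finset.range (n+1), ENNReal.ofReal ((k:ℝ)^σ) * μ {ω | X ω = k}
      = ENNReal.ofReal (∑ k ∈ Finset.range (n+1),
          (k:ℝ)^σ * ((n.choose k : ℝ) * ρ^k * (1-ρ)^(n-k))) := by
    rw [ENNReal.ofReal_sum_of_nonneg]
    · apply Finset.sum_congr rfl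
      intro k _
      rw [hdist k, ← ENNReal.ofReal_mul (Real.rpow_nonneg (Nat.cast_nonneg k) σ)]
    · intro k _
      have h1ρ : (0:ℝ) ≤ 1 - ρ := by linarith
      have := Real.rpow_nonneg (Nat.cast_nonneg k : (0:ℝ) ≤ (k:ℝ)) σ
      positivity
  rw [h1, h2, h3]
  apply ENNReal.ofReal_le_ofReal
  set a := (n:ℝ)*ρ with haa
  have ha0 : 0 < a := by
    have : (1:ℝ) ≤ (n:ℝ) := by exact_mod_cast hn
    nlinarith
  have hmax : a ≤ max a (a^σ) := le_max_left _ _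
  have hmax' : a^σ ≤ max a (a^σ) := le_max_right _ _
  have hmax0 : 0 ≤ max a (a^σ) := le_trans ha0.le hmax
  rcases lt_or_ge a 1 with hcase | hcase
  · have := caseA σ hσ n hn ρ hρ0 hρ1 hcase
    calc ∑ k ∈ Finset.range (n+1), (k:ℝ)^σ * ((n.choose k : ℝ) * ρ^k * (1-ρ)^(n-k))
        ≤ C1 * a := this
      _ ≤ (C1 + C2) * max a (a^σ) := by nlinarith
  · have := caseB σ hσ n ρ hρ0 hρ1 hcase
    calc ∑ k ∈ Finset.range (n+1), (k:ℝ)^σ * ((n.choose k : ℝ) * ρ^k * (1-ρ)^(n-k))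
        ≤ C2 * a^σ := this
      _ ≤ (C1 + C2) * max a (a^σ) := by nlinarith [Real.rpow_nonneg ha0.le σ]

end
end
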